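/- arXiv:2107.05082 — 7 statements merged into one kernel-verified Lean document; each statement's English description precedes it below -/
import Mathlib

section
/- (Sufficiency for strong minimax universality.) Let Λ be a family of probability measures on X and d > 0. Suppose there exists a sequence of countable partitions {π_n : n ≥ 1} of X^n such that: (i) π_n ∈ Q_n(d) for all n ≥ 1; (ii) lim_{n→∞} (1/n)·R⁺(Λ^n, σ(π_n)) = 0; and (iii) lim_{n→∞} (1/n)·sup_{μ ∈ Λ} [H_{σ(π_n)}(μ^n) − n·R_n(d, μ^n)] = 0 (in particular H_{σ(π_n)}(μ^n) < ∞ for all μ ∈ Λ and all large n). Then there exists a D-semifaithful coding scheme {ξ_n : n ≥ 1} operating at distortion d that is strongly minimax universal for Λ. -/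
open Filter Topology
open scoped ENNReal NNReal BigOperators

noncomputable section

/-- Block (single-letter) distortion `ρ_n` on `Fin n → α`. -/
def blockDist {α : Type*} (ρ : α → α → ℝ) (n : ℕ) (x y : Fin n → α) : ℝ :=
  (∑ i, ρ (x i) (y i)) / n

/-- `π` is a (countable) partition: nonempty cells, every point in exactly one cell. -/
def IsPartition {α : Type*} (π : Set (Set α)) : Prop :=
  (∀ s ∈ π, s.Nonempty) ∧ ∀ x : α, ∃! s, s ∈ π ∧ x ∈ s

/-- `Q_n(d)`: partitions whose every cell contains a prototype within distortion `d`. -/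
def QPart {α : Type*} (ρ : α → α → ℝ) (n : ℕ) (d : ℝ) (π : Set (Set (Fin n → α))) : Prop :=
  IsPartition π ∧ ∀ A ∈ π, ∃ y ∈ A, ∀ x ∈ A, blockDist ρ n x y ≤ d

/-- Measure of a set under a pmf. -/
def measOf {α : Type*} (p : α → ℝ≥0∞) (s : Set α) : ℝ≥0∞ := ∑' x : s, p x.1

/-- `entTerm t = t·log₂(1/t) ∈ [0,∞]`, with the convention `0·log 0 = 0`. -/
def entTerm (t : ℝ≥0∞) : ℝ≥0∞ := ENNReal.ofReal (-(t.toReal * Real.logb 2 t.toReal))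

/-- Entropy of `p` restricted to the σ-field generated by the partition `π` (base 2). -/
def Hpart {α : Type*} (π : Set (Set α)) (p : α → ℝ≥0∞) : ℝ≥0∞ :=
  ∑' A : π, entTerm (measOf p A.1)

/-- Shannon entropy of a pmf (base 2). -/
def Hent {α : Type*} (p : α → ℝ≥0∞) : ℝ≥0∞ := ∑' x, entTerm (p x)

/-- Nonnegative per-cell KL term `(a log(a/b) − a + b)/log 2`; summed over a partition and
probability vectors (`∑ a = ∑ b = 1`) this gives exactly `∑ a log₂(a/b) ∈ [0,∞]` with the
usual conventions (`0·log(0/q) = 0`, `p·log(p/0) = ∞` for `p > 0`). -/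
def klTerm (a b : ℝ≥0∞) : ℝ≥0∞ :=
  if a = 0 then ENNReal.ofReal (b.toReal / Real.log 2)
  else if b = 0 then ⊤
  else ENNReal.ofReal
    ((a.toReal * Real.log (a.toReal / b.toReal) - a.toReal + b.toReal) / Real.log 2)

/-- Divergence `D_{σ(π)}(p‖q) ∈ [0,∞]` restricted to the cells of `π` (base 2). -/
def Dpart {α : Type*} (π : Set (Set α)) (p q : α → ℝ≥0∞) : ℝ≥0∞ :=
  ∑' A : π, klTerm (measOf p A.1) (measOf q A.1)

/-- `p` is a probability mass function. -/
def IsPMF {α : Type*} (p : α → ℝ≥0∞) : Prop := ∑' a, p a = 1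

/-- `n`-fold i.i.d. product pmf `μ^n`. -/
def prodPMF {α : Type*} (p : α → ℝ≥0∞) (n : ℕ) : (Fin n → α) → ℝ≥0∞ :=
  fun x => ∏ i, p (x i)

/-- `Λ^n = {μ^n : μ ∈ Λ}`. -/
def prodFam {α : Type*} (Λ : Set (α → ℝ≥0∞)) (n : ℕ) : Set ((Fin n → α) → ℝ≥0∞) :=
  (fun μ => prodPMF μ n) '' Λ

/-- Operational rate `R_n(d, μ_n) = inf_{π ∈ Q_n(d)} H_{σ(π)}(μ_n)/n`. -/
def opRate {α : Type*} (ρ : α → α → ℝ) (n : ℕ) (d : ℝ) (μn : (Fin n → α) → ℝ≥0∞) : ℝ≥0∞ :=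
  ⨅ π ∈ {π | QPart ρ n d π}, Hpart π μn / (n : ℝ≥0∞)

/-- Kraft inequality for a codeword-length function on `B`. -/
def Kraft {β : Type*} (B : Set β) (ℓ : β → ℕ) : Prop :=
  (∑' y : B, (2⁻¹ : ℝ≥0∞) ^ ℓ y.1) ≤ 1

/-- D-semifaithful code `ξ_n = (φ, ℓ)` of length `n` operating at distortion `d`. -/
def IsCode {α : Type*} (ρ : α → α → ℝ) (n : ℕ) (d : ℝ)
    (φ : (Fin n → α) → Fin n → α) (ℓ : (Fin n → α) → ℕ) : Prop :=
  (∀ x, blockDist ρ n x (φ x) ≤ d) ∧ (∀ y ∈ Set.range φ, φ y = y) ∧ Kraft (Set.range φ) ℓ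

/-- Rate (bits per letter) of the code `(φ, ℓ)` under `μn`. -/
def codeRate {α : Type*} {n : ℕ} (φ : (Fin n → α) → Fin n → α) (ℓ : (Fin n → α) → ℕ)
    (μn : (Fin n → α) → ℝ≥0∞) : ℝ≥0∞ :=
  (∑' x, μn x * (ℓ (φ x) : ℝ≥0∞)) / (n : ℝ≥0∞)

/-- Partition of the block space induced by a quantizer. -/
def codePart {α : Type*} {n : ℕ} (φ : (Fin n → α) → Fin n → α) : Set (Set (Fin n → α)) :=
  {s | ∃ y ∈ Set.range φ, s = φ ⁻¹' {y}}

/-- Information radius `R⁺(Λn, σ(π)) = inf_v sup_{μn ∈ Λn} D_{σ(π)}(μn‖v)`. -/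
def Rplus {β : Type*} (Λn : Set (β → ℝ≥0∞)) (π : Set (Set β)) : ℝ≥0∞ :=
  ⨅ v : {v : β → ℝ≥0∞ // IsPMF v}, ⨆ μn ∈ Λn, Dpart π μn v.1

/-- A distortion function: nonnegative and positive off the diagonal. -/
def IsDistortion {α : Type*} (ρ : α → α → ℝ) : Prop :=
  (∀ x y, 0 ≤ ρ x y) ∧ ∀ x y, x ≠ y → 0 < ρ x y

/-- Unbounded distortion consistent w.r.t. the Euclidean norm on the alphabet ℕ. -/
def ConsistentUnbounded (ρ : ℕ → ℕ → ℝ) : Prop :=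
  ∀ K : ℝ, 0 < K → ∃ ε : ℝ, 0 < ε ∧ ∀ i j : ℕ, ε ≤ |(i : ℝ) - (j : ℝ)| → K ≤ ρ i j

/-- Envelope family `Λ_f`. -/
def envFam (f : ℕ → ℝ≥0) : Set (ℕ → ℝ≥0∞) :=
  {p | IsPMF p ∧ ∀ x, p x ≤ (f x : ℝ≥0∞)}

/-- Tail set `T_k = {k, k+1, ...}`. -/
def Tset (k : ℕ) : Set ℕ := {x | k ≤ x}

/-- Tail sum of the envelope `∑_{x ≥ k} f(x)`. -/
def tailF (f : ℕ → ℝ≥0) (k : ℕ) : ℝ≥0∞ := ∑' x : Tset k, (f x.1 : ℝ≥0∞)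

/-- `τ_f = min{k ≥ 1 : ∑_{x ≥ k} f(x) ≤ 1}`. -/
def tauF (f : ℕ → ℝ≥0) : ℕ := sInf {k | 1 ≤ k ∧ tailF f k ≤ 1}

/-- The envelope distribution `μ̃_f`. -/
def mutilde (f : ℕ → ℝ≥0) : ℕ → ℝ≥0∞ := fun x =>
  if tauF f ≤ x then (f x : ℝ≥0∞)
  else if x = tauF f - 1 then 1 - tailF f (tauF f)
  else 0

/-- `u_f(n) = min{k ≥ 1 : μ̃_f(T_{k+1}) < 1/n}`. -/
def ufn (f : ℕ → ℝ≥0) (n : ℕ) : ℕ :=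
  sInf {k | 1 ≤ k ∧ measOf (mutilde f) (Tset (k + 1)) < (n : ℝ≥0∞)⁻¹}

/-- Tail-partition entropy `H_{σ(π̃_k)}(p)` for the partition `π̃_k = {Γ_k, {k+1}, {k+2}, ...}`. -/
def Htail (k : ℕ) (p : ℕ → ℝ≥0∞) : ℝ≥0∞ :=
  entTerm (measOf p (Set.Iic k)) + ∑' x : Tset (k + 1), entTerm (p x.1)

/-!
Take a mixture `v` that nearly attains the information radius `R⁺(Λⁿ, σ(πₙ))`, quantize every
block to the prototype of its cell of `πₙ`, and describe the cell by a Shannon code for the cell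
masses of `v`. Under `μⁿ` the expected codeword length is at most
`H_{σ(πₙ)}(μⁿ) + D_{σ(πₙ)}(μⁿ‖v) + 2 ≤ H_{σ(πₙ)}(μⁿ) + R⁺(Λⁿ, σ(πₙ)) + 3`, so the per-letter
redundancy over `R_n(d, μⁿ)` is bounded, uniformly over `Λ`, by the quantities in (ii) and (iii)
plus `3/n`.
-/

namespace IsPartition

variable {β : Type*} {P : Set (Set β)}

def cell (hP : IsPartition P) (x : β) : P :=
  ⟨(hP.2 x).choose, (hP.2 x).choose_spec.1.1⟩

variable (hP : IsPartition P)

theorem mem_cell (x : β) : x ∈ (hP.cell x).1 :=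
  (hP.2 x).choose_spec.1.2

theorem cell_eq_iff {x : β} {A : P} : hP.cell x = A ↔ x ∈ A.1 :=
  ⟨fun h => h ▸ hP.mem_cell x,
    fun hx => Subtype.ext ((hP.2 x).unique (hP.2 x).choose_spec.1 ⟨A.2, hx⟩)⟩

theorem cell_surjective : Function.Surjective hP.cell := fun A =>
  let ⟨x, hx⟩ := hP.1 A.1 A.2
  ⟨x, hP.cell_eq_iff.2 hx⟩

theorem countable [Countable β] (hP : IsPartition P) : Countable P :=
  hP.cell_surjective.countable

theorem tsum_measOf (hP : IsPartition P) (f : β → ℝ≥0∞) :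
    ∑' A : P, measOf f A.1 = ∑' x, f x := by
  have hfiber : ∀ A : P, hP.cell ⁻¹' {A} = A.1 := fun A => Set.ext fun _ => hP.cell_eq_iff
  rw [← ENNReal.tsum_fiberwise f hP.cell]
  exact tsum_congr fun A => by rw [hfiber A]; rfl

theorem tsum_mul_cell (μ : β → ℝ≥0∞) (g : P → ℝ≥0∞) :
    ∑' x, μ x * g (hP.cell x) = ∑' A : P, measOf μ A.1 * g A := by
  rw [← hP.tsum_measOf]
  refine tsum_congr fun A => ?_
  unfold measOf
  rw [← ENNReal.tsum_mul_right]
  exact tsum_congr fun x => by simp only [hP.cell_eq_iff.2 x.2]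

end IsPartition

namespace QPart

variable {α : Type*} {ρ : α → α → ℝ} {n : ℕ} {d : ℝ} {P : Set (Set (Fin n → α))}

theorem isPartition (hP : QPart ρ n d P) : IsPartition P :=
  hP.1

variable (hP : QPart ρ n d P)

def proto (A : P) : Fin n → α :=
  (hP.2 A.1 A.2).choose

theorem proto_mem (A : P) : hP.proto A ∈ A.1 :=
  (hP.2 A.1 A.2).choose_spec.1

theorem blockDist_proto_le {A : P} {x : Fin n → α} (hx : x ∈ A.1) :
    blockDist ρ n x (hP.proto A) ≤ d :=
  (hP.2 A.1 A.2).choose_spec.2 x hx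

theorem cell_proto (A : P) : hP.isPartition.cell (hP.proto A) = A :=
  hP.isPartition.cell_eq_iff.2 (hP.proto_mem A)

theorem proto_injective : Function.Injective hP.proto := fun A B h => by
  rw [← hP.cell_proto A, h, hP.cell_proto]

def quantizer (x : Fin n → α) : Fin n → α :=
  hP.proto (hP.isPartition.cell x)

theorem cell_quantizer (x : Fin n → α) :
    hP.isPartition.cell (hP.quantizer x) = hP.isPartition.cell x :=
  hP.cell_proto _

theorem range_quantizer : Set.range hP.quantizer = Set.range hP.proto :=
  hP.isPartition.cell_surjective.range_comp _

theorem isCode {L : P → ℕ} (hL : ∑' A, (2⁻¹ : ℝ≥0∞) ^ L A ≤ 1) :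
    IsCode ρ n d hP.quantizer (fun y => L (hP.isPartition.cell y)) := by
  refine ⟨fun x => hP.blockDist_proto_le (hP.isPartition.mem_cell x), ?_, ?_⟩
  · rintro _ ⟨x, rfl⟩
    rw [quantizer, hP.cell_quantizer]
    rfl
  · rw [Kraft, hP.range_quantizer,
      tsum_range (fun y => (2⁻¹ : ℝ≥0∞) ^ L (hP.isPartition.cell y)) hP.proto_injective]
    simpa only [hP.cell_proto] using hL

theorem tsum_mul_length_quantizer (μ : (Fin n → α) → ℝ≥0∞) (L : P → ℕ) :
    ∑' x, μ x * (L (hP.isPartition.cell (hP.quantizer x)) : ℝ≥0∞)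
      = ∑' A : P, measOf μ A.1 * L A := by
  simp only [hP.cell_quantizer]
  exact hP.isPartition.tsum_mul_cell μ fun A => (L A : ℝ≥0∞)

end QPart

theorem inv_two_pow_ceil_logb_inv_le {r : ℝ} (hr : 0 < r) :
    (2⁻¹ : ℝ) ^ ⌈Real.logb 2 r⁻¹⌉₊ ≤ r := by
  have hpow : r⁻¹ ≤ 2 ^ ⌈Real.logb 2 r⁻¹⌉₊ := by
    rw [← Real.rpow_natCast, ← Real.logb_le_iff_le_rpow one_lt_two (inv_pos.2 hr)]
    exact Nat.le_ceil _
  rw [inv_pow]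
  exact inv_le_of_inv_le₀ hr hpow

theorem ceil_logb_inv_lt {r : ℝ} (hr : 0 < r) (hr1 : r ≤ 1) :
    (⌈Real.logb 2 r⁻¹⌉₊ : ℝ) < Real.logb 2 r⁻¹ + 1 :=
  Nat.ceil_lt_add_one (Real.logb_nonneg one_lt_two (one_le_inv_iff₀.2 ⟨hr, hr1⟩))

/-- Shannon lengths `⌈log₂ 1/r_i⌉` for the weights `r_i = q_i/2 + ε_i`, where the small positive
`ε_i` give every index a finite length while costing at most one extra bit. -/
theorem exists_kraft_lengths {ι : Type*} [Countable ι] (q : ι → ℝ≥0∞) (hq : ∑' i, q i ≤ 1) :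
    ∃ L : ι → ℕ, ∑' i, (2⁻¹ : ℝ≥0∞) ^ L i ≤ 1 ∧
      ∀ i, q i ≠ 0 → (L i : ℝ) ≤ Real.logb 2 (q i).toReal⁻¹ + 2 := by
  obtain ⟨ε, hε0, hε⟩ := ENNReal.exists_pos_sum_of_countable' (ε := 2⁻¹) (by simp) ι
  set r : ι → ℝ≥0∞ := fun i => q i / 2 + ε i
  have hr_sum : ∑' i, r i ≤ 1 := by
    calc ∑' i, r i = (∑' i, q i) / 2 + ∑' i, ε i := by
          simp only [r, ENNReal.tsum_add, div_eq_mul_inv, ENNReal.tsum_mul_right]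
      _ ≤ 1 / 2 + 2⁻¹ := add_le_add (ENNReal.div_le_div_right hq 2) hε.le
      _ = 1 := by rw [one_div, ENNReal.inv_two_add_inv_two]
  have hr_le (i : ι) : r i ≤ 1 := (ENNReal.le_tsum i).trans hr_sum
  have hr_ne_top (i : ι) : r i ≠ ⊤ := ne_top_of_le_ne_top ENNReal.one_ne_top (hr_le i)
  have hr_pos (i : ι) : 0 < (r i).toReal :=
    ENNReal.toReal_pos (by simp [r, (hε0 i).ne']) (hr_ne_top i)
  have hr_le_one (i : ι) : (r i).toReal ≤ 1 := ENNReal.toReal_le_of_le_ofReal zero_le_one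
    (by simpa using hr_le i)
  refine ⟨fun i => ⌈Real.logb 2 (r i).toReal⁻¹⌉₊, ?_, fun i hqi => ?_⟩
  · refine le_trans (ENNReal.tsum_le_tsum fun i => ?_) hr_sum
    rw [← ENNReal.toReal_le_toReal (by simp) (hr_ne_top i)]
    simpa using inv_two_pow_ceil_logb_inv_le (hr_pos i)
  · have hqi_pos : 0 < (q i).toReal :=
      ENNReal.toReal_pos hqi (ne_top_of_le_ne_top ENNReal.one_ne_top
        ((ENNReal.le_tsum i).trans hq))
    have hhalf : (q i).toReal / 2 ≤ (r i).toReal := by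
      rw [← ENNReal.toReal_ofNat 2, ← ENNReal.toReal_div]
      exact ENNReal.toReal_mono (hr_ne_top i) le_self_add
    have hlogb : Real.logb 2 (r i).toReal⁻¹ ≤ Real.logb 2 (q i).toReal⁻¹ + 1 := by
      calc Real.logb 2 (r i).toReal⁻¹ ≤ Real.logb 2 ((q i).toReal / 2)⁻¹ :=
            Real.logb_le_logb_of_le one_lt_two (inv_pos.2 (hr_pos i))
              (inv_anti₀ (by positivity) hhalf)
        _ = Real.logb 2 (q i).toReal⁻¹ + 1 := by
            rw [Real.logb_inv, Real.logb_inv, Real.logb_div hqi_pos.ne' two_ne_zero,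
              Real.logb_self_eq_one one_lt_two]
            ring
    linarith [ceil_logb_inv_lt (hr_pos i) (hr_le_one i)]

theorem mul_add_le_entTerm_add_klTerm {a q : ℝ≥0∞} (ha : a ≤ 1) (hq : q ≤ 1) {m : ℕ}
    (hm : q ≠ 0 → (m : ℝ) ≤ Real.logb 2 q.toReal⁻¹ + 2) :
    a * m + q * ENNReal.ofReal (Real.log 2)⁻¹
      ≤ entTerm a + klTerm a q + a * ENNReal.ofReal (Real.log 2)⁻¹ + 2 * a := by
  have hq_top : q ≠ ⊤ := ne_top_of_le_ne_top ENNReal.one_ne_top hq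
  rcases eq_or_ne a 0 with rfl | ha0
  · simp [klTerm, div_eq_mul_inv, ENNReal.ofReal_mul, hq_top]
  rcases eq_or_ne q 0 with rfl | hq0
  · simp [klTerm, ha0]
  have hlog2 : 0 < Real.log 2 := Real.log_pos one_lt_two
  obtain ⟨A, hA0, rfl⟩ : ∃ A : ℝ, 0 < A ∧ a = ENNReal.ofReal A :=
    ⟨a.toReal, ENNReal.toReal_pos ha0 (ne_top_of_le_ne_top ENNReal.one_ne_top ha),
      (ENNReal.ofReal_toReal (ne_top_of_le_ne_top ENNReal.one_ne_top ha)).symm⟩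
  obtain ⟨Q, hQ0, rfl⟩ : ∃ Q : ℝ, 0 < Q ∧ q = ENNReal.ofReal Q :=
    ⟨q.toReal, ENNReal.toReal_pos hq0 hq_top, (ENNReal.ofReal_toReal hq_top).symm⟩
  have hA1 : A ≤ 1 := ENNReal.ofReal_le_one.1 ha
  have hm' : (m : ℝ) ≤ Real.logb 2 Q⁻¹ + 2 := by
    simpa [ENNReal.toReal_ofReal hQ0.le] using hm hq0
  have hent : 0 ≤ -(A * Real.logb 2 A) :=
    neg_nonneg.2 (mul_nonpos_of_nonneg_of_nonpos hA0.le (Real.logb_nonpos one_lt_two hA0.le hA1))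
  have hkl : 0 ≤ (A * Real.log (A / Q) - A + Q) / Real.log 2 := by
    refine div_nonneg ?_ hlog2.le
    have hlog := mul_le_mul_of_nonneg_left
      (Real.one_sub_inv_le_log_of_pos (div_pos hA0 hQ0)) hA0.le
    rw [inv_div, mul_sub, mul_one, mul_div_cancel₀ Q hA0.ne'] at hlog
    linarith
  have hreal : A * m + Q * (Real.log 2)⁻¹
      ≤ -(A * Real.logb 2 A) + (A * Real.log (A / Q) - A + Q) / Real.log 2
        + A * (Real.log 2)⁻¹ + 2 * A := by
    have hident : -(A * Real.logb 2 A) + (A * Real.log (A / Q) - A + Q) / Real.log 2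
        + A * (Real.log 2)⁻¹ + 2 * A = A * (Real.logb 2 Q⁻¹ + 2) + Q * (Real.log 2)⁻¹ := by
      rw [Real.log_div hA0.ne' hQ0.ne', Real.logb, Real.logb, Real.log_inv]
      field_simp
      ring
    rw [hident]
    nlinarith
  rw [entTerm, klTerm, if_neg ha0, if_neg hq0, ENNReal.toReal_ofReal hA0.le,
    ENNReal.toReal_ofReal hQ0.le]
  calc ENNReal.ofReal A * m + ENNReal.ofReal Q * ENNReal.ofReal (Real.log 2)⁻¹
      = ENNReal.ofReal (A * m + Q * (Real.log 2)⁻¹) := by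
        rw [ENNReal.ofReal_add (by positivity) (by positivity), ENNReal.ofReal_mul hA0.le,
          ENNReal.ofReal_mul hQ0.le, ENNReal.ofReal_natCast]
    _ ≤ _ := ENNReal.ofReal_le_ofReal hreal
    _ = _ := by
        rw [ENNReal.ofReal_add (by positivity) (by positivity),
          ENNReal.ofReal_add (by positivity) (by positivity), ENNReal.ofReal_add hent hkl,
          ENNReal.ofReal_mul hA0.le, ENNReal.ofReal_mul zero_le_two, ENNReal.ofReal_ofNat]

theorem IsPartition.tsum_measOf_mul_le_Hpart_add_Dpart {β : Type*} {P : Set (Set β)}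
    (hP : IsPartition P) {μ v : β → ℝ≥0∞} (hμ : IsPMF μ) (hv : IsPMF v) {L : P → ℕ}
    (hL : ∀ A : P, measOf v A.1 ≠ 0 → (L A : ℝ) ≤ Real.logb 2 (measOf v A.1).toReal⁻¹ + 2) :
    ∑' A : P, measOf μ A.1 * L A ≤ Hpart P μ + Dpart P μ v + 2 := by
  set c := ENNReal.ofReal (Real.log 2)⁻¹
  have hcells {p : β → ℝ≥0∞} (hp : IsPMF p) : ∑' A : P, measOf p A.1 = 1 :=
    (hP.tsum_measOf p).trans hp
  have hle_one {p : β → ℝ≥0∞} (hp : IsPMF p) (A : P) : measOf p A.1 ≤ 1 :=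
    (ENNReal.le_tsum A).trans (hcells hp).le
  have hsum := ENNReal.tsum_le_tsum fun A : P =>
    mul_add_le_entTerm_add_klTerm (hle_one hμ A) (hle_one hv A) (hL A)
  simp only [ENNReal.tsum_add, ENNReal.tsum_mul_right, ENNReal.tsum_mul_left, hcells hμ,
    hcells hv, one_mul, mul_one] at hsum
  rw [← ENNReal.add_le_add_iff_right (ENNReal.ofReal_ne_top (r := (Real.log 2)⁻¹))]
  calc ∑' A : P, measOf μ A.1 * L A + c ≤ Hpart P μ + Dpart P μ v + c + 2 := hsum
    _ = Hpart P μ + Dpart P μ v + 2 + c := by ring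

theorem QPart.exists_code_tsum_le {α : Type*} [Countable α] {ρ : α → α → ℝ} {n : ℕ} {d : ℝ}
    {P : Set (Set (Fin n → α))} (hP : QPart ρ n d P) {v : (Fin n → α) → ℝ≥0∞} (hv : IsPMF v) :
    ∃ (φ : (Fin n → α) → Fin n → α) (ℓ : (Fin n → α) → ℕ), IsCode ρ n d φ ℓ ∧
      ∀ μ, IsPMF μ → ∑' x, μ x * (ℓ (φ x) : ℝ≥0∞) ≤ Hpart P μ + Dpart P μ v + 2 := by
  have := hP.isPartition.countable
  obtain ⟨L, hKraft, hL⟩ := exists_kraft_lengths (fun A : P => measOf v A.1)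
    ((hP.isPartition.tsum_measOf v).trans_le hv.le)
  refine ⟨hP.quantizer, fun y => L (hP.isPartition.cell y), hP.isCode hKraft, fun μ hμ => ?_⟩
  rw [hP.tsum_mul_length_quantizer]
  exact hP.isPartition.tsum_measOf_mul_le_Hpart_add_Dpart hμ hv hL

theorem exists_isPMF_Dpart_le_Rplus_add_one {β : Type*} [Nonempty β] (Λn : Set (β → ℝ≥0∞))
    (P : Set (Set β)) :
    ∃ v, IsPMF v ∧ ∀ μ ∈ Λn, Dpart P μ v ≤ Rplus Λn P + 1 := by
  classical
  rcases eq_or_ne (Rplus Λn P) ⊤ with htop | hfin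
  · obtain ⟨b⟩ := ‹Nonempty β›
    exact ⟨fun y => if y = b then 1 else 0, tsum_ite_eq b 1, fun μ _ => by simp [htop]⟩
  · obtain ⟨v, hv⟩ := iInf_lt_iff.1 (ENNReal.lt_add_right hfin one_ne_zero)
    exact ⟨v.1, v.2, fun μ hμ => (le_biSup (fun μ => Dpart P μ v.1) hμ).trans hv.le⟩

theorem QPart.exists_code_codeRate_le {α : Type*} [Countable α] [Nonempty α]
    {ρ : α → α → ℝ} {n : ℕ} {d : ℝ} {P : Set (Set (Fin n → α))} (hP : QPart ρ n d P)
    {Λn : Set ((Fin n → α) → ℝ≥0∞)} (hΛn : ∀ μ ∈ Λn, IsPMF μ) :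
    ∃ (φ : (Fin n → α) → Fin n → α) (ℓ : (Fin n → α) → ℕ), IsCode ρ n d φ ℓ ∧
      ∀ μ ∈ Λn, codeRate φ ℓ μ ≤ (Hpart P μ + (Rplus Λn P + 3)) / n := by
  obtain ⟨v, hv, hvD⟩ := exists_isPMF_Dpart_le_Rplus_add_one Λn P
  obtain ⟨φ, ℓ, hcode, hlen⟩ := hP.exists_code_tsum_le hv
  refine ⟨φ, ℓ, hcode, fun μ hμ => ENNReal.div_le_div_right ?_ _⟩
  calc ∑' x, μ x * (ℓ (φ x) : ℝ≥0∞) ≤ Hpart P μ + Dpart P μ v + 2 := hlen μ (hΛn μ hμ)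
    _ ≤ Hpart P μ + (Rplus Λn P + 1) + 2 := by gcongr; exact hvD μ hμ
    _ = Hpart P μ + (Rplus Λn P + 3) := by ring

theorem isPMF_prodPMF {α : Type*} {p : α → ℝ≥0∞} (hp : IsPMF p) (n : ℕ) :
    IsPMF (prodPMF p n) := by
  induction n with
  | zero => simp [IsPMF, prodPMF]
  | succ n ih =>
    have hcons (a : α) (x : Fin n → α) :
        prodPMF p (n + 1) (Fin.consEquiv (fun _ => α) (a, x)) = p a * prodPMF p n x := by
      simp [prodPMF, Fin.consEquiv, Fin.prod_univ_succ]
    unfold IsPMF at hp ih ⊢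
    rw [← (Fin.consEquiv fun _ => α).tsum_eq, ENNReal.tsum_prod']
    simpa only [hcons, ENNReal.tsum_mul_left, ih, mul_one] using hp

theorem biSup_tsub_le_of_le_add_div {ι : Type*} {s : Set ι} {f g H : ι → ℝ≥0∞} {c : ℝ≥0∞}
    {n : ℕ} (hn : n ≠ 0) (hf : ∀ i ∈ s, f i ≤ (H i + c) / n) :
    ⨆ i ∈ s, (f i - g i) ≤ (⨆ i ∈ s, (H i - n * g i)) / n + c / n := by
  refine iSup₂_le fun i hi => tsub_le_iff_right.2 ?_
  calc f i ≤ (H i + c) / n := hf i hi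
    _ ≤ (H i - n * g i + n * g i + c) / n := by gcongr; exact le_tsub_add
    _ = (H i - n * g i) / n + c / n + g i := by
        rw [ENNReal.add_div, ENNReal.add_div, mul_div_assoc,
          ENNReal.mul_div_cancel (Nat.cast_ne_zero.2 hn) (ENNReal.natCast_ne_top n)]
        ring
    _ ≤ (⨆ i ∈ s, (H i - n * g i)) / n + c / n + g i := by
        gcongr
        exact le_biSup (fun i => H i - n * g i) hi

theorem sufficiency_strong_minimax_general (ρ : ℕ → ℕ → ℝ) (d : ℝ)
    (Λ : Set (ℕ → ℝ≥0∞)) (hΛ : ∀ μ ∈ Λ, IsPMF μ)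
    (π : ∀ n : ℕ, Set (Set (Fin n → ℕ)))
    (h1 : ∀ n : ℕ, 1 ≤ n → QPart ρ n d (π n))
    (h2 : Tendsto (fun n : ℕ => Rplus (prodFam Λ n) (π n) / (n : ℝ≥0∞)) atTop (𝓝 0))
    (h3 : Tendsto (fun n : ℕ =>
        (⨆ μ ∈ Λ, (Hpart (π n) (prodPMF μ n) - (n : ℝ≥0∞) * opRate ρ n d (prodPMF μ n)))
          / (n : ℝ≥0∞)) atTop (𝓝 0)) :
    ∃ (φ : ∀ n : ℕ, (Fin n → ℕ) → Fin n → ℕ) (ℓ : ∀ n : ℕ, (Fin n → ℕ) → ℕ),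
      (∀ n : ℕ, 1 ≤ n → IsCode ρ n d (φ n) (ℓ n)) ∧
      Tendsto (fun n : ℕ =>
          ⨆ μ ∈ Λ, (codeRate (φ n) (ℓ n) (prodPMF μ n) - opRate ρ n d (prodPMF μ n)))
        atTop (𝓝 0) := by
  have hcodes (n : ℕ) : ∃ (φ : (Fin n → ℕ) → Fin n → ℕ) (ℓ : (Fin n → ℕ) → ℕ), 1 ≤ n →
      IsCode ρ n d φ ℓ ∧ ∀ μ ∈ Λ, codeRate φ ℓ (prodPMF μ n)
        ≤ (Hpart (π n) (prodPMF μ n) + (Rplus (prodFam Λ n) (π n) + 3)) / n := by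
    by_cases hn : 1 ≤ n
    · obtain ⟨φ, ℓ, hcode, hrate⟩ := (h1 n hn).exists_code_codeRate_le (Λn := prodFam Λ n)
        (by rintro _ ⟨μ, hμ, rfl⟩; exact isPMF_prodPMF (hΛ μ hμ) n)
      exact ⟨φ, ℓ, fun _ => ⟨hcode, fun μ hμ => hrate _ ⟨μ, hμ, rfl⟩⟩⟩
    · exact ⟨id, 0, fun h => absurd h hn⟩
  choose φ ℓ hφℓ using hcodes
  refine ⟨φ, ℓ, fun n hn => (hφℓ n hn).1, ?_⟩
  have hbound : ∀ᶠ n : ℕ in atTop,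
      ⨆ μ ∈ Λ, (codeRate (φ n) (ℓ n) (prodPMF μ n) - opRate ρ n d (prodPMF μ n))
        ≤ (⨆ μ ∈ Λ, (Hpart (π n) (prodPMF μ n) - n * opRate ρ n d (prodPMF μ n))) / n
          + (Rplus (prodFam Λ n) (π n) / n + 3 / n) := by
    filter_upwards [eventually_ge_atTop 1] with n hn
    rw [← ENNReal.add_div]
    exact biSup_tsub_le_of_le_add_div (by omega) (hφℓ n hn).2
  have hthree : Tendsto (fun n : ℕ => (3 : ℝ≥0∞) / n) atTop (𝓝 0) := by
    simpa using ENNReal.Tendsto.const_div ENNReal.tendsto_nat_nhds_top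
      (Or.inr ENNReal.ofNat_ne_top) (a := 3)
  have hlim := h3.add (h2.add hthree)
  rw [add_zero, add_zero] at hlim
  exact tendsto_of_tendsto_of_tendsto_of_le_of_le' tendsto_const_nhds hlim
    (.of_forall fun _ => zero_le) hbound

/-- Sufficiency for strong minimax universality: if there is a sequence of
partitions `π_n ∈ Q_n(d)` with `(1/n)·R⁺(Λ^n, σ(π_n)) → 0` and
`(1/n)·sup_{μ ∈ Λ}[H_{σ(π_n)}(μ^n) − n·R_n(d, μ^n)] → 0`, then there is a D-semifaithful
coding scheme at distortion `d` that is strongly minimax universal for `Λ`. -/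
theorem sufficiency_strong_minimax (ρ : ℕ → ℕ → ℝ) (hρ : IsDistortion ρ)
    (d : ℝ) (hd : 0 < d)
    (Λ : Set (ℕ → ℝ≥0∞)) (hΛ : ∀ μ ∈ Λ, IsPMF μ)
    (π : ∀ n : ℕ, Set (Set (Fin n → ℕ)))
    (h1 : ∀ n : ℕ, 1 ≤ n → QPart ρ n d (π n))
    (h2 : Tendsto (fun n : ℕ => Rplus (prodFam Λ n) (π n) / (n : ℝ≥0∞)) atTop (𝓝 0))
    (h3 : Tendsto (fun n : ℕ =>
        (⨆ μ ∈ Λ, (Hpart (π n) (prodPMF μ n) - (n : ℝ≥0∞) * opRate ρ n d (prodPMF μ n)))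
          / (n : ℝ≥0∞)) atTop (𝓝 0)) :
    ∃ (φ : ∀ n : ℕ, (Fin n → ℕ) → Fin n → ℕ) (ℓ : ∀ n : ℕ, (Fin n → ℕ) → ℕ),
      (∀ n : ℕ, 1 ≤ n → IsCode ρ n d (φ n) (ℓ n)) ∧
      Tendsto (fun n : ℕ =>
          ⨆ μ ∈ Λ, (codeRate (φ n) (ℓ n) (prodPMF μ n) - opRate ρ n d (prodPMF μ n)))
        atTop (𝓝 0) :=
  sufficiency_strong_minimax_general ρ d Λ hΛ π h1 h2 h3
end
end

section
/- (Infinite projected information radius for non-summable envelopes.) Let ρ be an unbounded distortion function that is consistent with respect to the Euclidean norm, and let f : X → [0,∞) with ∑_{x ∈ X} f(x) = ∞. Then for every d > 0, every n ≥ 1, and every partition π ∈ Q_n(d), the projected information radius is infinite: R⁺(Λ_f^n, σ(π)) = inf_{v ∈ P(X^n)} sup_{μ ∈ Λ_f} D_{σ(π)}(μ^n‖v) = +∞. -/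
open Filter Topology
open scoped ENNReal NNReal BigOperators

noncomputable section

/-!
Fix a pmf `v` on `ℕⁿ`. Consistency of `ρ` gives a `c` such that on every cell of `π ∈ Q_n(d)`
each coordinate oscillates by at most `c`. As `v` is summable, `v {x | m ≤ x₀}` is arbitrarily
small for `m` large; as `∑ f = ∞`, `f` normalised on a finite set of mass `≥ 1` beyond `m + c`
lies in `Λ_f`. Its `n`-fold product lives on finitely many cells, all inside `{x | m ≤ x₀}`, so
grouping these cells (the log-sum inequality, i.e. convexity of `klFun`) bounds
`D_{σ(π)}(μⁿ‖v)` below by `klTerm 1 (v {x | m ≤ x₀})`, which is unbounded as `m → ∞`.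
-/
open Function InformationTheory

theorem ConvexOn.perspective_add_le {s : Set ℝ} {g : ℝ → ℝ} (hg : ConvexOn ℝ s g)
    {a₁ a₂ b₁ b₂ : ℝ} (hb₁ : 0 < b₁) (hb₂ : 0 < b₂) (h₁ : a₁ / b₁ ∈ s) (h₂ : a₂ / b₂ ∈ s) :
    (b₁ + b₂) * g ((a₁ + a₂) / (b₁ + b₂)) ≤ b₁ * g (a₁ / b₁) + b₂ * g (a₂ / b₂) := by
  have hb : 0 < b₁ + b₂ := add_pos hb₁ hb₂
  have hmix : b₁ / (b₁ + b₂) * (a₁ / b₁) + b₂ / (b₁ + b₂) * (a₂ / b₂) = (a₁ + a₂) / (b₁ + b₂) := by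
    field_simp
  have key : g ((b₁ / (b₁ + b₂)) • (a₁ / b₁) + (b₂ / (b₁ + b₂)) • (a₂ / b₂)) ≤
      (b₁ / (b₁ + b₂)) • g (a₁ / b₁) + (b₂ / (b₁ + b₂)) • g (a₂ / b₂) :=
    hg.2 h₁ h₂ (by positivity) (by positivity) (by rw [← add_div, div_self hb.ne'])
  rw [smul_eq_mul, smul_eq_mul, hmix, smul_eq_mul, smul_eq_mul] at key
  calc (b₁ + b₂) * g ((a₁ + a₂) / (b₁ + b₂))
      ≤ (b₁ + b₂) * (b₁ / (b₁ + b₂) * g (a₁ / b₁) + b₂ / (b₁ + b₂) * g (a₂ / b₂)) := by gcongr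
    _ = b₁ * g (a₁ / b₁) + b₂ * g (a₂ / b₂) := by field_simp

lemma klTerm_eq_ofReal_klFun (a : ℝ≥0∞) {b : ℝ≥0∞} (hb₀ : b ≠ 0) (hb : b ≠ ⊤) :
    klTerm a b = ENNReal.ofReal (b.toReal * klFun (a.toReal / b.toReal) / Real.log 2) := by
  have hb' : b.toReal ≠ 0 := ENNReal.toReal_ne_zero.2 ⟨hb₀, hb⟩
  by_cases ha : a = 0
  · simp [klTerm, ha, klFun_zero]
  · rw [klTerm, if_neg ha, if_neg hb₀, klFun]
    congr 2
    field_simp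
    ring

lemma klTerm_zero_zero : klTerm 0 0 = 0 := by simp [klTerm]

lemma klTerm_zero_right {a : ℝ≥0∞} (ha : a ≠ 0) : klTerm a 0 = ⊤ := by simp [klTerm, ha]

lemma klTerm_add_le {a₁ a₂ b₁ b₂ : ℝ≥0∞} (ha₁ : a₁ ≠ ⊤) (ha₂ : a₂ ≠ ⊤) (hb₁ : b₁ ≠ ⊤)
    (hb₂ : b₂ ≠ ⊤) : klTerm (a₁ + a₂) (b₁ + b₂) ≤ klTerm a₁ b₁ + klTerm a₂ b₂ := by
  rcases eq_or_ne b₁ 0 with rfl | hb₁₀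
  · rcases eq_or_ne a₁ 0 with rfl | ha₁₀
    · simp [klTerm_zero_zero]
    · simp [klTerm_zero_right ha₁₀]
  rcases eq_or_ne b₂ 0 with rfl | hb₂₀
  · rcases eq_or_ne a₂ 0 with rfl | ha₂₀
    · simp [klTerm_zero_zero]
    · simp [klTerm_zero_right ha₂₀]
  have hb₁' : 0 < b₁.toReal := ENNReal.toReal_pos hb₁₀ hb₁
  have hb₂' : 0 < b₂.toReal := ENNReal.toReal_pos hb₂₀ hb₂
  have hk₁ : 0 ≤ klFun (a₁.toReal / b₁.toReal) := klFun_nonneg (by positivity)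
  have hk₂ : 0 ≤ klFun (a₂.toReal / b₂.toReal) := klFun_nonneg (by positivity)
  rw [klTerm_eq_ofReal_klFun _ (by simp [hb₁₀]) (ENNReal.add_ne_top.2 ⟨hb₁, hb₂⟩),
    klTerm_eq_ofReal_klFun _ hb₁₀ hb₁, klTerm_eq_ofReal_klFun _ hb₂₀ hb₂,
    ← ENNReal.ofReal_add (by positivity) (by positivity),
    ENNReal.toReal_add ha₁ ha₂, ENNReal.toReal_add hb₁ hb₂, ← add_div]
  gcongr
  exact convexOn_klFun.perspective_add_le hb₁' hb₂' (Set.mem_Ici.2 (by positivity))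
    (Set.mem_Ici.2 (by positivity))

lemma klTerm_sum_le {ι : Type*} (T : Finset ι) {a b : ι → ℝ≥0∞}
    (ha : ∀ i ∈ T, a i ≠ ⊤) (hb : ∀ i ∈ T, b i ≠ ⊤) :
    klTerm (∑ i ∈ T, a i) (∑ i ∈ T, b i) ≤ ∑ i ∈ T, klTerm (a i) (b i) := by
  classical
  induction T using Finset.induction_on with
  | empty => simp [klTerm_zero_zero]
  | insert j T hj ih =>
    simp only [Finset.forall_mem_insert] at ha hb
    rw [Finset.sum_insert hj, Finset.sum_insert hj, Finset.sum_insert hj]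
    calc _ ≤ klTerm (a j) (b j) + klTerm (∑ i ∈ T, a i) (∑ i ∈ T, b i) :=
          klTerm_add_le ha.1 (ENNReal.sum_ne_top.2 ha.2) hb.1 (ENNReal.sum_ne_top.2 hb.2)
      _ ≤ _ := by gcongr; exact ih ha.2 hb.2

lemma exists_natCast_le_klTerm_one (M : ℕ) :
    ∃ δ > 0, ∀ b ≤ δ, (M : ℝ≥0∞) ≤ klTerm 1 b := by
  refine ⟨ENNReal.ofReal (Real.exp (-(M * Real.log 2 + 1))), by positivity, fun b hbδ => ?_⟩
  rcases eq_or_ne b 0 with rfl | hb₀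
  · simp [klTerm_zero_right one_ne_zero]
  have hb : b ≠ ⊤ := ne_top_of_le_ne_top ENNReal.ofReal_ne_top hbδ
  have hb' : 0 < b.toReal := ENNReal.toReal_pos hb₀ hb
  have hlogb : Real.log b.toReal ≤ -(M * Real.log 2 + 1) := by
    rw [Real.log_le_iff_le_exp hb']
    exact ENNReal.toReal_le_of_le_ofReal (Real.exp_pos _).le hbδ
  rw [klTerm_eq_ofReal_klFun _ hb₀ hb, ← ENNReal.ofReal_natCast]
  refine ENNReal.ofReal_le_ofReal ((le_div_iff₀ (Real.log_pos one_lt_two)).2 ?_)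
  have : b.toReal * klFun (1 / b.toReal) = -Real.log b.toReal + b.toReal - 1 := by
    rw [klFun, one_div, Real.log_inv]; field_simp
  rw [ENNReal.toReal_one, this]
  linarith

lemma measOf_mono {α : Type*} (p : α → ℝ≥0∞) {s t : Set α} (h : s ⊆ t) :
    measOf p s ≤ measOf p t :=
  ENNReal.tsum_comp_le_tsum_of_injective (Set.inclusion_injective h) fun x : t => p x

lemma measOf_ne_top {α : Type*} {p : α → ℝ≥0∞} (hp : ∑' x, p x ≠ ⊤) (s : Set α) :
    measOf p s ≠ ⊤ :=
  ne_top_of_le_ne_top hp (ENNReal.tsum_comp_le_tsum_of_injective Subtype.val_injective p)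

lemma measOf_biUnion_finset {α ι : Type*} (p : α → ℝ≥0∞) (T : Finset ι) {s : ι → Set α}
    (hs : (T : Set ι).Pairwise (onFun Disjoint s)) :
    measOf p (⋃ i ∈ T, s i) = ∑ i ∈ T, measOf p (s i) :=
  Summable.tsum_finset_bUnion_disjoint hs (fun _ _ => ENNReal.summable)

lemma measOf_eq_tsum_of_support_subset {α : Type*} {p : α → ℝ≥0∞} {s : Set α}
    (hs : support p ⊆ s) : measOf p s = ∑' x, p x :=
  tsum_subtype_eq_of_support_subset hs

lemma exists_measOf_setOf_le_lt {β : Type*} {v : β → ℝ≥0∞} (hv : ∑' x, v x ≠ ⊤) (g : β → ℕ)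
    {δ : ℝ≥0∞} (hδ : 0 < δ) : ∃ m : ℕ, measOf v {x | m ≤ g x} < δ := by
  obtain ⟨F, hF⟩ := ((ENNReal.tendsto_tsum_compl_atTop_zero hv).eventually_lt_const hδ).exists
  refine ⟨F.sup g + 1, (measOf_mono v (t := {x | x ∉ F}) fun x hx hxF => ?_).trans_lt hF⟩
  have hx : F.sup g + 1 ≤ g x := hx
  have := Finset.le_sup (f := g) hxF
  omega

lemma tsum_prodPMF {α : Type*} (p : α → ℝ≥0∞) (n : ℕ) :
    ∑' x, prodPMF p n x = (∑' a, p a) ^ n := by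
  induction n with
  | zero => simp [prodPMF]
  | succ n ih =>
    rw [← (Fin.consEquiv fun _ => α).tsum_eq, ENNReal.tsum_prod']
    simp only [prodPMF] at ih ⊢
    simp only [Fin.consEquiv_apply, Fin.prod_univ_succ, Fin.cons_zero, Fin.cons_succ,
      ENNReal.tsum_mul_left]
    rw [ENNReal.tsum_mul_right, ih, pow_succ, mul_comm]

lemma support_prodPMF_subset {α : Type*} (p : α → ℝ≥0∞) (n : ℕ) :
    support (prodPMF p n) ⊆ Set.univ.pi fun _ => support p :=
  fun _ hx i _ => Finset.prod_ne_zero_iff.1 hx i (Finset.mem_univ i)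

lemma IsPartition.pairwise_disjoint {α : Type*} {π : Set (Set α)} (hπ : IsPartition π) :
    Pairwise (onFun Disjoint fun A : π => A.1) := fun A B hAB =>
  Set.disjoint_left.2 fun _ hxA hxB =>
    hAB (Subtype.ext ((hπ.2 _).unique ⟨A.2, hxA⟩ ⟨B.2, hxB⟩))

lemma IsPartition.exists_finset_cover {α : Type*} {π : Set (Set α)} (hπ : IsPartition π)
    {s : Set α} (hs : s.Finite) :
    ∃ T : Finset π, s ⊆ ⋃ A ∈ T, A.1 ∧ ∀ A ∈ T, ∃ x ∈ s, x ∈ A.1 := by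
  classical
  choose cell hcell using fun x => (hπ.2 x).exists
  refine ⟨hs.toFinset.image fun x => ⟨cell x, (hcell x).1⟩, fun x hx => ?_, ?_⟩
  · exact Set.mem_biUnion (Finset.mem_image_of_mem _ (hs.mem_toFinset.2 hx)) (hcell x).2
  · simp only [Finset.mem_image, Set.Finite.mem_toFinset]
    rintro _ ⟨x, hx, rfl⟩
    exact ⟨x, hx, (hcell x).2⟩

lemma klTerm_measOf_biUnion_le_Dpart {α : Type*} {π : Set (Set α)} (hπ : IsPartition π)
    {p q : α → ℝ≥0∞} (hp : ∑' x, p x ≠ ⊤) (hq : ∑' x, q x ≠ ⊤) (T : Finset π) :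
    klTerm (measOf p (⋃ A ∈ T, A.1)) (measOf q (⋃ A ∈ T, A.1)) ≤ Dpart π p q := by
  have hdisj := hπ.pairwise_disjoint.set_pairwise (T : Set π)
  rw [measOf_biUnion_finset p T hdisj, measOf_biUnion_finset q T hdisj]
  exact (klTerm_sum_le T (fun _ _ => measOf_ne_top hp _) (fun _ _ => measOf_ne_top hq _)).trans
    (ENNReal.sum_le_tsum T)

lemma single_le_mul_of_blockDist_le {α : Type*} {ρ : α → α → ℝ} (hρ : ∀ a b, 0 ≤ ρ a b)
    {n : ℕ} {d : ℝ} {x y : Fin n → α} (h : blockDist ρ n x y ≤ d) (i : Fin n) :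
    ρ (x i) (y i) ≤ n * d := by
  have hn : (0 : ℝ) < n := Nat.cast_pos.2 i.pos
  rw [blockDist, div_le_iff₀ hn, mul_comm] at h
  exact (Finset.single_le_sum (fun j _ => hρ (x j) (y j)) (Finset.mem_univ i)).trans h

lemma QPart.exists_coord_le_add {ρ : ℕ → ℕ → ℝ} (hρ : ∀ a b, 0 ≤ ρ a b)
    (hcons : ConsistentUnbounded ρ) {n : ℕ} {d : ℝ} (hd : 0 < d) {π : Set (Set (Fin n → ℕ))}
    (hπ : QPart ρ n d π) :
    ∃ c : ℕ, ∀ A ∈ π, ∀ x ∈ A, ∀ x' ∈ A, ∀ i, x i ≤ x' i + c := by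
  obtain ⟨ε, -, hε⟩ := hcons (n * d + 1) (by positivity)
  refine ⟨⌈2 * ε⌉₊, fun A hA x hx x' hx' i => ?_⟩
  obtain ⟨y, -, hy⟩ := hπ.2 A hA
  have near : ∀ z ∈ A, |(z i : ℝ) - y i| < ε := fun z hz => by
    by_contra! hfar
    linarith [hε _ _ hfar, single_le_mul_of_blockDist_le hρ (hy z hz) i]
  have h2ε : 2 * ε ≤ ⌈2 * ε⌉₊ := Nat.le_ceil _
  have hx := abs_lt.1 (near x hx)
  have hx' := abs_lt.1 (near x' hx')
  exact_mod_cast (by linarith : (x i : ℝ) ≤ x' i + ⌈2 * ε⌉₊)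

lemma exists_finset_one_le_sum_of_tsum_eq_top {f : ℕ → ℝ≥0} (hf : ∑' x, (f x : ℝ≥0∞) = ⊤)
    (k : ℕ) : ∃ S : Finset ℕ, (∀ x ∈ S, k ≤ x) ∧ 1 ≤ ∑ x ∈ S, (f x : ℝ≥0∞) := by
  have htail : ∑' x : ↥((Finset.range k : Set ℕ)ᶜ), (f x : ℝ≥0∞) = ⊤ := by
    have hsplit := ENNReal.sum_add_tsum_compl (Finset.range k) fun x => (f x : ℝ≥0∞)
    rw [hf] at hsplit
    exact (ENNReal.add_eq_top.1 hsplit).resolve_left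
      (ENNReal.sum_ne_top.2 fun _ _ => ENNReal.coe_ne_top)
  rw [ENNReal.tsum_eq_iSup_sum] at htail
  obtain ⟨S, hS⟩ := lt_iSup_iff.1 (htail ▸ ENNReal.one_lt_top)
  refine ⟨S.map (Embedding.subtype _), fun x hx => ?_, by rw [Finset.sum_map]; exact hS.le⟩
  obtain ⟨x, -, rfl⟩ := Finset.mem_map.1 hx
  simpa using x.2

lemma exists_mem_envFam_support_subset {f : ℕ → ℝ≥0} {S : Finset ℕ}
    (hS : 1 ≤ ∑ x ∈ S, (f x : ℝ≥0∞)) : ∃ μ ∈ envFam f, support μ ⊆ S := by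
  classical
  set c := ∑ x ∈ S, (f x : ℝ≥0∞)
  have hc₀ : c ≠ 0 := (one_pos.trans_le hS).ne'
  have hc : c ≠ ⊤ := ENNReal.sum_ne_top.2 fun _ _ => ENNReal.coe_ne_top
  refine ⟨fun x => if x ∈ S then c⁻¹ * f x else 0, ⟨?_, fun x => ?_⟩, fun x hx => ?_⟩
  · rw [IsPMF, tsum_eq_sum (s := S) fun x hx => if_neg hx, Finset.sum_ite_mem, Finset.inter_self,
      ← Finset.mul_sum, ENNReal.inv_mul_cancel hc₀ hc]
  · dsimp only; split_ifs
    · exact mul_le_of_le_one_left zero_le (ENNReal.inv_le_one.2 hS)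
    · exact zero_le
  · by_contra hxS
    exact hx (if_neg hxS)

/-- Infinite projected information radius for non-summable envelopes: if `ρ` is
an unbounded distortion consistent with the Euclidean norm and `∑_x f(x) = ∞`, then for every
`d > 0`, `n ≥ 1` and every partition `π ∈ Q_n(d)`,
`R⁺(Λ_f^n, σ(π)) = inf_{v ∈ P(X^n)} sup_{μ ∈ Λ_f} D_{σ(π)}(μ^n‖v) = ∞`. -/
theorem infinite_projected_radius (ρ : ℕ → ℕ → ℝ) (hρ : IsDistortion ρ)
    (hcons : ConsistentUnbounded ρ)
    (f : ℕ → ℝ≥0) (hf : (∑' x, (f x : ℝ≥0∞)) = ⊤)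
    (d : ℝ) (hd : 0 < d) (n : ℕ) (hn : 1 ≤ n)
    (π : Set (Set (Fin n → ℕ))) (hπ : QPart ρ n d π) :
    Rplus (prodFam (envFam f) n) π = ⊤ := by
  obtain ⟨c, hc⟩ := hπ.exists_coord_le_add hρ.1 hcons hd
  let i₀ : Fin n := ⟨0, hn⟩
  refine iInf_eq_top.2 fun v => eq_top_iff.2 ?_
  rw [← ENNReal.iSup_natCast]
  refine iSup_le fun M => ?_
  obtain ⟨δ, hδ, hMδ⟩ := exists_natCast_le_klTerm_one M
  have hv : ∑' x, v.1 x ≠ ⊤ := v.2 ▸ ENNReal.one_ne_top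
  obtain ⟨m, hm⟩ := exists_measOf_setOf_le_lt hv (· i₀) hδ
  obtain ⟨S, hSm, hS⟩ := exists_finset_one_le_sum_of_tsum_eq_top hf (m + c)
  obtain ⟨μ, hμ, hμS⟩ := exists_mem_envFam_support_subset hS
  have hsupp : support (prodPMF μ n) ⊆ Set.univ.pi fun _ => ↑S :=
    (support_prodPMF_subset μ n).trans (Set.pi_mono fun _ _ => hμS)
  obtain ⟨T, hST, hT⟩ := hπ.1.exists_finset_cover (Set.Finite.pi fun _ => S.finite_toSet)
  set U := ⋃ A ∈ T, A.1
  have hμn : ∑' x, prodPMF μ n x = 1 := by rw [tsum_prodPMF, hμ.1, one_pow]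
  have hμU : measOf (prodPMF μ n) U = 1 :=
    (measOf_eq_tsum_of_support_subset (hsupp.trans hST)).trans hμn
  have hvU : measOf v.1 U ≤ δ := by
    refine (measOf_mono v.1 fun x' hx' => ?_).trans hm.le
    obtain ⟨A, hAT, hx'A⟩ := Set.mem_iUnion₂.1 hx'
    obtain ⟨x, hxS, hxA⟩ := hT A hAT
    have hx_far : m + c ≤ x i₀ := hSm _ (hxS i₀ (Set.mem_univ _))
    have hx_near : x i₀ ≤ x' i₀ + c := hc A.1 A.2 x hxA x' hx'A i₀
    show m ≤ x' i₀
    omega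
  calc (M : ℝ≥0∞) ≤ klTerm (measOf (prodPMF μ n) U) (measOf v.1 U) := hμU ▸ hMδ _ hvU
    _ ≤ Dpart π (prodPMF μ n) v.1 :=
      klTerm_measOf_biUnion_le_Dpart hπ.1 (hμn ▸ ENNReal.one_ne_top) hv T
    _ ≤ ⨆ μn ∈ prodFam (envFam f) n, Dpart π μn v.1 := le_iSup₂_of_le _ ⟨μ, hμ, rfl⟩ le_rfl
end
end

section
/- (Key inequality behind the maximum-entropy property of the envelope distribution.) Let f : X → [0,∞) with ∑_x f(x) < ∞ and H(μ̃_f) < ∞, where μ̃_f is the envelope distribution and H(μ̃_f) = −∑_x μ̃_f(x) log₂ μ̃_f(x). Then for every k ≥ τ_f with ∑_{x ≥ k+1} f(x) < 1 − ∑_{x ≥ k+1} f(x), and every μ ∈ Λ_f, H_{σ(π̃_k)}(μ̃_f) − H_{σ(π̃_k)}(μ) ≥ ∑_{x ≥ k+1} (f(x) − μ({x}))·log₂( (∑_{y ≥ k+1} f(y)) / f(x) ) ≥ 0. -/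
open Filter Topology
open scoped ENNReal NNReal BigOperators

noncomputable section

/-!
With `η(t) = -t log₂ t`, concave with `η'(t) = -log₂ t - 1/ln 2`, and `S = ∑_{x > k} f(x)`,
`M = μ(x > k)`: the tangent line of `η` at `f(x)` gives, on each tail cell,
`η(μ x) + (f x - μ x) log₂(S / f x) ≤ η(f x) + (f x - μ x)(log₂ S + 1/ln 2)`,
and the tangent line at `1 - S` gives, on the cell `Γ_k`,
`η(1 - M) + (S - M)(log₂(1 - S) + 1/ln 2) ≤ η(1 - S)`.
Since `S < 1/2`, the slope `log₂(1 - S) + 1/ln 2` is nonnegative and dominates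
`log₂ S + 1/ln 2`; as `∑_{x > k} (f x - μ x) = S - M`, the excess over the tail cells is paid
for by `Γ_k`.
-/

open Real

lemma negMulLog_div_log_two_le {u v : ℝ} (hu : 0 ≤ u) (hv : 0 < v) :
    negMulLog u / log 2 ≤ negMulLog v / log 2 + (v - u) * (logb 2 v + 1 / log 2) := by
  have tangent : negMulLog u ≤ negMulLog v + (v - u) * (log v + 1) := by
    rcases hu.eq_or_lt with rfl | hu
    · simp [negMulLog]; nlinarith
    · have h := mul_le_mul_of_nonneg_left (log_le_sub_one_of_pos (div_pos hv hu)) hu.le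
      rw [log_div hv.ne' hu.ne', mul_sub_one, mul_div_cancel₀ _ hu.ne'] at h
      simp only [negMulLog]
      nlinarith
  have hlog2 : 0 < log 2 := log_pos one_lt_two
  calc negMulLog u / log 2 ≤ (negMulLog v + (v - u) * (log v + 1)) / log 2 := by gcongr
    _ = _ := by rw [logb]; field_simp

lemma negMulLog_div_log_two_add_mul_logb_le {a b s c : ℝ} (ha : 0 ≤ a) (hab : a ≤ b)
    (hbs : b ≤ s) (hc : logb 2 s + 1 / log 2 ≤ c) :
    negMulLog a / log 2 + (b - a) * logb 2 (s / b) ≤ negMulLog b / log 2 + (b - a) * c := by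
  rcases (ha.trans hab).eq_or_lt with rfl | hb
  · obtain rfl : a = 0 := le_antisymm hab ha
    simp
  have tangent := negMulLog_div_log_two_le ha hb
  rw [logb_div (hb.trans_le hbs).ne' hb.ne']
  nlinarith [mul_le_mul_of_nonneg_left hc (sub_nonneg.mpr hab)]

lemma logb_le_logb_one_sub {s : ℝ} (hs0 : 0 ≤ s) (hs : s < 1 - s) :
    logb 2 s ≤ logb 2 (1 - s) := by
  rcases hs0.eq_or_lt with rfl | hs0
  · simp
  · exact logb_le_logb_of_le one_lt_two hs0 hs.le

lemma logb_one_sub_add_inv_log_two_nonneg {s : ℝ} (hs : s < 1 - s) :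
    0 ≤ logb 2 (1 - s) + 1 / log 2 := by
  have hlog2 : 0 < log 2 := log_pos one_lt_two
  have half : -1 ≤ logb 2 (1 - s) := by
    have := logb_le_logb_of_le (y := 1 - s) one_lt_two (by norm_num : (0 : ℝ) < 1 / 2)
      (by linarith)
    rwa [one_div, logb_inv, logb_self_eq_one one_lt_two] at this
  have : 1 ≤ 1 / log 2 := by
    rw [le_div_iff₀ hlog2]
    linarith [log_two_lt_d9]
  linarith

lemma ENNReal.ofReal_add_ofReal_le {x y z w : ℝ} (hx : 0 ≤ x) (hy : 0 ≤ y)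
    (h : x + y ≤ z + w) :
    ENNReal.ofReal x + ENNReal.ofReal y ≤ ENNReal.ofReal z + ENNReal.ofReal w := by
  rw [← ENNReal.ofReal_add hx hy]
  exact (ENNReal.ofReal_le_ofReal h).trans ENNReal.ofReal_add_le

lemma ENNReal.toReal_lt_one_sub_toReal {S : ℝ≥0∞} (hS : S < 1 - S) :
    S.toReal < 1 - S.toReal := by
  have hS1 : S ≤ 1 := hS.le.trans tsub_le_self
  rw [← ENNReal.toReal_one, ← ENNReal.toReal_sub_of_le hS1 ENNReal.one_ne_top]
  exact ENNReal.toReal_strict_mono (ENNReal.sub_ne_top ENNReal.one_ne_top) hS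

lemma entTerm_eq_ofReal_negMulLog (t : ℝ≥0∞) :
    entTerm t = ENNReal.ofReal (negMulLog t.toReal / log 2) := by
  rw [entTerm, negMulLog, logb]
  ring_nf

lemma entTerm_add_ofReal_le {a : ℝ≥0∞} {b : ℝ≥0} {s c : ℝ} (hab : a ≤ b)
    (hbs : (b : ℝ) ≤ s) (hs : s ≤ 1) (hc : logb 2 s + 1 / log 2 ≤ c) :
    entTerm a + ENNReal.ofReal (((b : ℝ) - a.toReal) * logb 2 (s / b))
      ≤ entTerm b + (b - a) * ENNReal.ofReal c := by
  have ha : a.toReal ≤ b := by simpa using ENNReal.toReal_mono ENNReal.coe_ne_top hab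
  have hsub : ((b : ℝ≥0∞) - a) = ENNReal.ofReal ((b : ℝ) - a.toReal) := by
    rw [← ENNReal.ofReal_toReal (ENNReal.sub_ne_top ENNReal.coe_ne_top),
      ENNReal.toReal_sub_of_le hab ENNReal.coe_ne_top, ENNReal.coe_toReal]
  have hlogb : 0 ≤ logb 2 (s / b) := by
    rcases b.coe_nonneg.eq_or_lt with hb | hb
    · simp [← hb]
    · exact logb_nonneg one_lt_two ((one_le_div hb).mpr hbs)
  rw [entTerm_eq_ofReal_negMulLog, entTerm_eq_ofReal_negMulLog, hsub,
    ← ENNReal.ofReal_mul (sub_nonneg.mpr ha), ENNReal.coe_toReal]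
  apply ENNReal.ofReal_add_ofReal_le
  · exact div_nonneg (negMulLog_nonneg ENNReal.toReal_nonneg (by linarith)) (log_pos one_lt_two).le
  · exact mul_nonneg (sub_nonneg.mpr ha) hlogb
  · exact negMulLog_div_log_two_add_mul_logb_le ENNReal.toReal_nonneg ha hbs hc

lemma entTerm_one_sub_add_le {M S : ℝ≥0∞} (hMS : M ≤ S) (hS : S < 1 - S) :
    entTerm (1 - M) + (S - M) * ENNReal.ofReal (logb 2 (1 - S.toReal) + 1 / log 2)
      ≤ entTerm (1 - S) := by
  have hs := ENNReal.toReal_lt_one_sub_toReal hS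
  have hS1 : S ≤ 1 := hS.le.trans tsub_le_self
  have hS_top : S ≠ ⊤ := ne_top_of_le_ne_top ENNReal.one_ne_top hS1
  have hm : M.toReal ≤ S.toReal := ENNReal.toReal_mono hS_top hMS
  have hm0 : 0 ≤ M.toReal := ENNReal.toReal_nonneg
  have hc := logb_one_sub_add_inv_log_two_nonneg hs
  have tangent := negMulLog_div_log_two_le (u := 1 - M.toReal) (v := 1 - S.toReal)
    (by linarith) (by linarith)
  rw [entTerm_eq_ofReal_negMulLog, entTerm_eq_ofReal_negMulLog,
    ENNReal.toReal_sub_of_le (hMS.trans hS1) ENNReal.one_ne_top,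
    ENNReal.toReal_sub_of_le hS1 ENNReal.one_ne_top, ENNReal.toReal_one,
    ← ENNReal.ofReal_toReal (ENNReal.sub_ne_top hS_top), ENNReal.toReal_sub_of_le hMS hS_top,
    ← ENNReal.ofReal_mul (sub_nonneg.mpr hm), ← ENNReal.ofReal_add]
  · exact ENNReal.ofReal_le_ofReal (by nlinarith)
  · exact div_nonneg (negMulLog_nonneg (by linarith) (by linarith)) (log_pos one_lt_two).le
  · exact mul_nonneg (sub_nonneg.mpr hm) hc

lemma compl_Iic_eq_Tset (k : ℕ) : (Set.Iic k)ᶜ = Tset (k + 1) := by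
  ext x
  simp [Tset]

lemma measOf_Iic_eq_one_sub {p : ℕ → ℝ≥0∞} (hp : IsPMF p) (k : ℕ) :
    measOf p (Set.Iic k) = 1 - measOf p (Tset (k + 1)) := by
  have hsplit := ENNReal.summable.tsum_add_tsum_compl (f := p) (s := Set.Iic k) ENNReal.summable
  rw [compl_Iic_eq_Tset, hp] at hsplit
  exact ENNReal.eq_sub_of_add_eq (ne_top_of_le_ne_top ENNReal.one_ne_top
    (hsplit ▸ le_add_self)) hsplit

lemma Htail_eq_of_isPMF {p : ℕ → ℝ≥0∞} (hp : IsPMF p) (k : ℕ) :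
    Htail k p = entTerm (1 - measOf p (Tset (k + 1))) + ∑' x : Tset (k + 1), entTerm (p x) := by
  rw [Htail, measOf_Iic_eq_one_sub hp]

lemma tauF_le {f : ℕ → ℝ≥0} {j : ℕ} (hj : 1 ≤ j) (htail : tailF f j ≤ 1) :
    tauF f ≤ j :=
  Nat.sInf_le ⟨hj, htail⟩

lemma mutilde_of_tauF_le {f : ℕ → ℝ≥0} {x : ℕ} (hx : tauF f ≤ x) : mutilde f x = f x :=
  if_pos hx

lemma isPMF_mutilde {f : ℕ → ℝ≥0} {j : ℕ} (hj : 1 ≤ j) (htail : tailF f j ≤ 1) :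
    IsPMF (mutilde f) := by
  obtain ⟨hτ, hτtail⟩ : 1 ≤ tauF f ∧ tailF f (tauF f) ≤ 1 :=
    Nat.sInf_mem (s := {k | 1 ≤ k ∧ tailF f k ≤ 1}) ⟨j, hj, htail⟩
  have hsplit : mutilde f = fun x => (Tset (tauF f)).indicator (fun x => (f x : ℝ≥0∞)) x
      + if x = tauF f - 1 then 1 - tailF f (tauF f) else 0 := by
    ext x
    by_cases hx : tauF f ≤ x
    · have : x ≠ tauF f - 1 := by omega
      simp [mutilde, Tset, hx, this]
    · simp [mutilde, Tset, hx]
  rw [IsPMF, hsplit, ENNReal.tsum_add, ← tsum_subtype, tsum_ite_eq]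
  exact add_tsub_cancel_of_le hτtail

lemma Htail_mutilde {f : ℕ → ℝ≥0} {k : ℕ} (htail : tailF f (k + 1) ≤ 1) :
    Htail k (mutilde f) = entTerm (1 - tailF f (k + 1)) + ∑' x : Tset (k + 1), entTerm (f x) := by
  have hτ : tauF f ≤ k + 1 := tauF_le (Nat.le_add_left 1 k) htail
  have htail_eq : ∀ x : Tset (k + 1), mutilde f x = f x :=
    fun x => mutilde_of_tauF_le (hτ.trans x.2)
  rw [Htail_eq_of_isPMF (isPMF_mutilde (Nat.le_add_left 1 k) htail), measOf]
  simp only [htail_eq]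
  rfl

lemma tsum_coe_tailF (f : ℕ → ℝ≥0) (k : ℕ) :
    ∑' x : Tset k, (f x : ℝ) = (tailF f k).toReal := by
  rw [tailF, ENNReal.tsum_toReal_eq fun _ => ENNReal.coe_ne_top]
  rfl

lemma tsum_sub_of_mem_envFam {f : ℕ → ℝ≥0} {μ : ℕ → ℝ≥0∞} (hμ : μ ∈ envFam f)
    (k : ℕ) (htail : tailF f k ≠ ⊤) :
    ∑' x : Tset k, ((f x : ℝ≥0∞) - μ x) = tailF f k - measOf μ (Tset k) := by
  have hle : measOf μ (Tset k) ≤ tailF f k := ENNReal.tsum_le_tsum fun x => hμ.2 x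
  refine ENNReal.eq_sub_of_add_eq (ne_top_of_le_ne_top htail hle) ?_
  rw [measOf, ← ENNReal.tsum_add]
  exact tsum_congr fun x => tsub_add_cancel_of_le (hμ.2 x)

theorem envelope_key_inequality_general (f : ℕ → ℝ≥0)
    (k : ℕ)
    (hsmall : tailF f (k + 1) < 1 - tailF f (k + 1))
    (μ : ℕ → ℝ≥0∞) (hμ : μ ∈ envFam f) :
    Htail k μ
      + (∑' x : Tset (k + 1),
          ENNReal.ofReal (((f x.1 : ℝ) - (μ x.1).toReal)
            * Real.logb 2 ((∑' y : Tset (k + 1), (f y.1 : ℝ)) / (f x.1 : ℝ))))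
      ≤ Htail k (mutilde f) := by
  set S := tailF f (k + 1)
  set M := measOf μ (Tset (k + 1))
  set c := logb 2 (1 - S.toReal) + 1 / log 2
  have hS1 : S ≤ 1 := hsmall.le.trans tsub_le_self
  have hS_top : S ≠ ⊤ := ne_top_of_le_ne_top ENNReal.one_ne_top hS1
  have hs := ENNReal.toReal_lt_one_sub_toReal hsmall
  have hterm (x : Tset (k + 1)) :
      entTerm (μ x) + ENNReal.ofReal (((f x : ℝ) - (μ x).toReal) * logb 2 (S.toReal / f x))
        ≤ entTerm (f x) + ((f x : ℝ≥0∞) - μ x) * ENNReal.ofReal c :=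
    entTerm_add_ofReal_le (hμ.2 x) (by simpa using ENNReal.toReal_mono hS_top (ENNReal.le_tsum x))
      (by linarith [ENNReal.toReal_nonneg (a := S)])
      (by linarith [logb_le_logb_one_sub ENNReal.toReal_nonneg hs])
  rw [tsum_coe_tailF, Htail_eq_of_isPMF hμ.1, Htail_mutilde hS1]
  calc _ = entTerm (1 - M) + ∑' x : Tset (k + 1),
        (entTerm (μ x)
          + ENNReal.ofReal (((f x : ℝ) - (μ x).toReal) * logb 2 (S.toReal / f x))) := by
        rw [ENNReal.tsum_add, add_assoc]
    _ ≤ entTerm (1 - M) + ∑' x : Tset (k + 1),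
        (entTerm (f x) + ((f x : ℝ≥0∞) - μ x) * ENNReal.ofReal c) := by
        gcongr _ + ?_
        exact ENNReal.tsum_le_tsum hterm
    _ = entTerm (1 - M) + (S - M) * ENNReal.ofReal c
        + ∑' x : Tset (k + 1), entTerm (f x) := by
        rw [ENNReal.tsum_add, ENNReal.tsum_mul_right, tsum_sub_of_mem_envFam hμ _ hS_top]
        ring
    _ ≤ entTerm (1 - S) + ∑' x : Tset (k + 1), entTerm (f x) := by
        gcongr
        exact entTerm_one_sub_add_le (ENNReal.tsum_le_tsum fun x => hμ.2 x) hsmall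

/-- Key inequality behind the maximum-entropy property of the envelope
distribution: if `∑_x f(x) < ∞`, `H(μ̃_f) < ∞`, `k ≥ τ_f` and
`∑_{x ≥ k+1} f(x) < 1 − ∑_{x ≥ k+1} f(x)`, then for every `μ ∈ Λ_f`,
`H_{σ(π̃_k)}(μ̃_f) − H_{σ(π̃_k)}(μ) ≥ ∑_{x ≥ k+1}(f(x) − μ(x))·log₂((∑_{y ≥ k+1} f(y))/f(x))
  ≥ 0` (stated additively, with the middle sum a nonnegative extended real). -/
theorem envelope_key_inequality (f : ℕ → ℝ≥0) (hf : (∑' x, (f x : ℝ≥0∞)) ≠ ⊤)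
    (hH : Hent (mutilde f) ≠ ⊤)
    (k : ℕ) (hk : tauF f ≤ k)
    (hsmall : tailF f (k + 1) < 1 - tailF f (k + 1))
    (μ : ℕ → ℝ≥0∞) (hμ : μ ∈ envFam f) :
    Htail k μ
      + (∑' x : Tset (k + 1),
          ENNReal.ofReal (((f x.1 : ℝ) - (μ x.1).toReal)
            * Real.logb 2 ((∑' y : Tset (k + 1), (f y.1 : ℝ)) / (f x.1 : ℝ))))
      ≤ Htail k (mutilde f) :=
  envelope_key_inequality_general f k hsmall μ hμ
end
end

section
/- (Polynomial envelopes satisfy the tail regularity condition.) Let p > 1 and f_p(i) = i^{−p} for i ∈ X = {1,2,3,...} (f_p is summable, so the envelope distribution μ̃_{f_p} is well defined). Then limsup_{k→∞} ( ∑_{i ≥ k} f_p(i)·log₂(1/f_p(i)) ) / ( μ̃_{f_p}(T_k)·log₂(1/μ̃_{f_p}(T_k)) ) < ∞. -/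
open Filter Topology
open scoped ENNReal NNReal BigOperators

noncomputable section

/-!
Write `s_q(x) = rpowTail q x = ∑_{i ≥ 0} (x + i)^{-q}`. Telescoping `x^{1-q}` with the mean value
theorem gives `x^{1-q}/(q-1) ≤ s_q(x) ≤ q/(q-1) · x^{1-q}` for `x ≥ 1`, so the denominator
`s_p(k) log(1/s_p(k))` is at least of order `k^{1-p} log k`. In the numerator,
`log(k+i) ≤ log k + ((k+i)/k)^ε/ε` with `ε = (p-1)/2` bounds `∑_{i ≥ k} i^{-p} log i` by
`log k · s_p(k) + k^{-ε}/ε · s_{p-ε}(k)`, which is also `O(k^{1-p} log k)`. Beyond `τ` the envelope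
distribution coincides with `f_p`, so `μ̃(T_k) = s_p(k)`.
-/

open Real

section RpowTail

variable {q x : ℝ}

lemma exists_rpow_one_sub_sub_eq (hx : 0 < x) :
    ∃ c ∈ Set.Ioo x (x + 1), x ^ (1 - q) - (x + 1) ^ (1 - q) = (q - 1) * c ^ (-q) := by
  have hderiv : ∀ c ∈ Set.Ioo x (x + 1),
      HasDerivAt (fun y => y ^ (1 - q)) ((1 - q) * c ^ (-q)) c :=
    fun c hc => by
      simpa [sub_sub_cancel_left] using
        Real.hasDerivAt_rpow_const (p := 1 - q) (Or.inl (hx.trans hc.1).ne')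
  have hcont : ContinuousOn (fun y : ℝ => y ^ (1 - q)) (Set.Icc x (x + 1)) :=
    continuousOn_id.rpow_const fun y hy => Or.inl (hx.trans_le hy.1).ne'
  obtain ⟨c, hc, hslope⟩ := exists_hasDerivAt_eq_slope _ _ (lt_add_one x) hcont hderiv
  refine ⟨c, hc, ?_⟩
  rw [add_sub_cancel_left, div_one] at hslope
  linarith

lemma rpow_one_sub_sub_rpow_one_sub_le (hq : 1 ≤ q) (hx : 0 < x) :
    x ^ (1 - q) - (x + 1) ^ (1 - q) ≤ (q - 1) * x ^ (-q) := by
  obtain ⟨c, hc, heq⟩ := exists_rpow_one_sub_sub_eq (q := q) hx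
  rw [heq]
  exact mul_le_mul_of_nonneg_left (rpow_le_rpow_of_nonpos hx hc.1.le (by linarith))
    (by linarith)

lemma le_rpow_one_sub_sub_rpow_one_sub (hq : 1 ≤ q) (hx : 0 < x) :
    (q - 1) * (x + 1) ^ (-q) ≤ x ^ (1 - q) - (x + 1) ^ (1 - q) := by
  obtain ⟨c, hc, heq⟩ := exists_rpow_one_sub_sub_eq (q := q) hx
  rw [heq]
  exact mul_le_mul_of_nonneg_left (rpow_le_rpow_of_nonpos (hx.trans hc.1) hc.2.le (by linarith))
    (by linarith)

lemma hasSum_rpow_one_sub_sub_rpow_one_sub (hq : 1 < q) (hx : 0 < x) :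
    HasSum (fun i : ℕ => (x + i) ^ (1 - q) - (x + i + 1) ^ (1 - q)) (x ^ (1 - q)) := by
  set g : ℕ → ℝ := fun i => (x + i) ^ (1 - q)
  have hg_succ (i : ℕ) : (x + i + 1) ^ (1 - q) = g (i + 1) := by
    simp only [g, Nat.cast_succ, add_assoc]
  simp only [hg_succ]
  have hanti (i : ℕ) : 0 ≤ g i - g (i + 1) := by
    rw [← hg_succ, sub_nonneg]
    exact rpow_le_rpow_of_nonpos (by positivity) (by linarith) (by linarith)
  rw [hasSum_iff_tendsto_nat_of_nonneg hanti]
  simp only [Finset.sum_range_sub']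
  have hlim : Tendsto g atTop (𝓝 0) := by
    have h := (tendsto_rpow_neg_atTop (by linarith : 0 < q - 1)).comp
      (tendsto_atTop_add_const_left _ x tendsto_natCast_atTop_atTop)
    simpa [g, Function.comp_def, neg_sub] using h
  simpa [g] using hlim.const_sub (g 0)

def rpowTail (q x : ℝ) : ℝ := ∑' i : ℕ, (x + i) ^ (-q)

lemma summable_add_nat_rpow_neg (hq : 1 < q) (hx : 0 ≤ x) :
    Summable fun i : ℕ => (x + i) ^ (-q) := by
  refine ((Real.summable_one_div_nat_add_rpow x q).2 hq).congr fun i => ?_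
  rw [add_comm, abs_of_nonneg (by positivity), rpow_neg (by positivity), one_div]

lemma rpow_one_sub_div_le_rpowTail (hq : 1 < q) (hx : 0 < x) :
    x ^ (1 - q) / (q - 1) ≤ rpowTail q x := by
  have htele := hasSum_rpow_one_sub_sub_rpow_one_sub hq hx
  have hle : x ^ (1 - q) ≤ ∑' i : ℕ, (q - 1) * (x + i) ^ (-q) := by
    rw [← htele.tsum_eq]
    exact htele.summable.tsum_le_tsum
      (fun i => rpow_one_sub_sub_rpow_one_sub_le hq.le (by positivity))
      ((summable_add_nat_rpow_neg hq hx.le).mul_left (q - 1))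
  rw [tsum_mul_left] at hle
  rwa [div_le_iff₀' (by linarith)]

lemma rpowTail_le (hq : 1 < q) (hx : 1 ≤ x) :
    rpowTail q x ≤ q / (q - 1) * x ^ (1 - q) := by
  have hx0 : 0 < x := by linarith
  have hsum := summable_add_nat_rpow_neg hq hx0.le
  have htele := hasSum_rpow_one_sub_sub_rpow_one_sub hq hx0
  have htail : ∑' i : ℕ, (x + (i + 1 : ℕ)) ^ (-q) ≤ x ^ (1 - q) / (q - 1) := by
    have hle : ∑' i : ℕ, (q - 1) * (x + (i + 1 : ℕ)) ^ (-q) ≤ x ^ (1 - q) := by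
      rw [← htele.tsum_eq]
      refine (((summable_nat_add_iff 1).2 hsum).mul_left (q - 1)).tsum_le_tsum (fun i => ?_)
        htele.summable
      simpa [add_assoc] using le_rpow_one_sub_sub_rpow_one_sub hq.le (by positivity : 0 < x + i)
    rw [tsum_mul_left] at hle
    rwa [le_div_iff₀' (by linarith)]
  have hhead : x ^ (-q) ≤ x ^ (1 - q) := rpow_le_rpow_of_exponent_le hx (by linarith)
  rw [rpowTail, hsum.tsum_eq_zero_add]
  calc (x + (0 : ℕ)) ^ (-q) + ∑' i : ℕ, (x + (i + 1 : ℕ)) ^ (-q)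
      ≤ x ^ (1 - q) + x ^ (1 - q) / (q - 1) := by simpa using add_le_add hhead htail
    _ = q / (q - 1) * x ^ (1 - q) := by field_simp [show q - 1 ≠ 0 by linarith]; ring

lemma rpowTail_pos (hq : 1 < q) (hx : 0 < x) : 0 < rpowTail q x :=
  (div_pos (rpow_pos_of_pos hx _) (by linarith)).trans_le (rpow_one_sub_div_le_rpowTail hq hx)

end RpowTail

section LogWeightedTail

variable {q x ε : ℝ}

lemma rpow_neg_mul_log_le {y : ℝ} (hε : 0 < ε) (hx : 0 < x) (hy : 0 < y) :
    y ^ (-q) * log y ≤ log x * y ^ (-q) + x ^ (-ε) / ε * y ^ (-(q - ε)) := by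
  have hlog : log y ≤ log x + y ^ ε * x ^ (-ε) / ε := by
    have h := log_le_rpow_div (div_pos hy hx).le hε
    rw [log_div hy.ne' hx.ne', div_rpow hy.le hx.le] at h
    rw [rpow_neg hx.le, ← div_eq_mul_inv]
    linarith
  have hexp : y ^ (-q) * y ^ ε = y ^ (-(q - ε)) := by rw [← rpow_add hy]; ring_nf
  calc y ^ (-q) * log y ≤ y ^ (-q) * (log x + y ^ ε * x ^ (-ε) / ε) :=
        mul_le_mul_of_nonneg_left hlog (by positivity)
    _ = log x * y ^ (-q) + x ^ (-ε) / ε * (y ^ (-q) * y ^ ε) := by ring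
    _ = _ := by rw [hexp]

lemma summable_add_nat_rpow_neg_mul_log (hq : 1 < q) (hx : 1 ≤ x) :
    Summable fun i : ℕ => (x + i) ^ (-q) * log (x + i) := by
  have hx0 : 0 < x := by linarith
  have hε : 0 < (q - 1) / 2 := by linarith
  have hqε : 1 < q - (q - 1) / 2 := by linarith
  refine Summable.of_nonneg_of_le
    (fun i => mul_nonneg (by positivity) (log_nonneg (le_add_of_le_of_nonneg hx i.cast_nonneg)))
    (fun i => rpow_neg_mul_log_le hε hx0 (by positivity)) ?_
  exact ((summable_add_nat_rpow_neg (q := q) (by linarith) hx0.le).mul_left _).add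
    ((summable_add_nat_rpow_neg hqε hx0.le).mul_left _)

lemma tsum_add_nat_rpow_neg_mul_log_le (hε : 0 < ε) (hqε : 1 < q - ε) (hx : 1 ≤ x) :
    ∑' i : ℕ, (x + i) ^ (-q) * log (x + i)
      ≤ log x * rpowTail q x + x ^ (-ε) / ε * rpowTail (q - ε) x := by
  have hx0 : 0 < x := by linarith
  have hsum_q := (summable_add_nat_rpow_neg (q := q) (by linarith) hx0.le).mul_left (log x)
  have hsum_qε := (summable_add_nat_rpow_neg hqε hx0.le).mul_left (x ^ (-ε) / ε)
  rw [rpowTail, rpowTail, ← tsum_mul_left, ← tsum_mul_left, ← hsum_q.tsum_add hsum_qε]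
  exact (summable_add_nat_rpow_neg_mul_log (by linarith) hx).tsum_le_tsum
    (fun i => rpow_neg_mul_log_le hε hx0 (by positivity)) (hsum_q.add hsum_qε)

lemma eventually_tsum_add_nat_rpow_neg_mul_log_le (hq : 1 < q) :
    ∀ᶠ x in atTop, ∑' i : ℕ, (x + i) ^ (-q) * log (x + i)
      ≤ (q / (q - 1) + 1) * (x ^ (1 - q) * log x) := by
  set ε := (q - 1) / 2
  have hε : 0 < ε := by simp only [ε]; linarith
  have hqε : 1 < q - ε := by simp only [ε]; linarith
  set C := (q - ε) / (q - ε - 1) / ε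
  filter_upwards [eventually_ge_atTop 1, tendsto_log_atTop.eventually_ge_atTop C] with x hx hlogx
  have hx0 : 0 < x := by linarith
  have hshifted : x ^ (-ε) / ε * rpowTail (q - ε) x ≤ log x * x ^ (1 - q) :=
    calc x ^ (-ε) / ε * rpowTail (q - ε) x
        ≤ x ^ (-ε) / ε * ((q - ε) / (q - ε - 1) * x ^ (1 - (q - ε))) :=
          mul_le_mul_of_nonneg_left (rpowTail_le hqε hx) (by positivity)
      _ = C * (x ^ (-ε) * x ^ (1 - (q - ε))) := by ring
      _ = C * x ^ (1 - q) := by rw [← rpow_add hx0]; ring_nf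
      _ ≤ log x * x ^ (1 - q) := mul_le_mul_of_nonneg_right hlogx (by positivity)
  calc ∑' i : ℕ, (x + i) ^ (-q) * log (x + i)
      ≤ log x * rpowTail q x + x ^ (-ε) / ε * rpowTail (q - ε) x :=
        tsum_add_nat_rpow_neg_mul_log_le hε hqε hx
    _ ≤ log x * (q / (q - 1) * x ^ (1 - q)) + log x * x ^ (1 - q) :=
        add_le_add (mul_le_mul_of_nonneg_left (rpowTail_le hq hx) (log_nonneg hx)) hshifted
    _ = _ := by ring

end LogWeightedTail

section TailEntropy

variable {q x : ℝ}

lemma eventually_rpow_one_sub_mul_log_le_negMulLog_rpowTail (hq : 1 < q) :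
    ∀ᶠ x in atTop, x ^ (1 - q) * log x ≤ 2 * negMulLog (rpowTail q x) := by
  filter_upwards [eventually_ge_atTop 1,
    tendsto_log_atTop.eventually_ge_atTop (2 * log (q / (q - 1)) / (q - 1))] with x hx hlogx
  have hx0 : 0 < x := by linarith
  set s := rpowTail q x
  have hs : 0 < s := rpowTail_pos hq hx0
  have hlog_s : log s ≤ log (q / (q - 1)) + (1 - q) * log x := by
    rw [← log_rpow hx0, ← log_mul (by positivity) (by positivity)]
    exact log_le_log hs (rpowTail_le hq hx)
  have hneg_log_s : (q - 1) / 2 * log x ≤ -log s := by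
    rw [div_le_iff₀' (by linarith)] at hlogx
    linarith
  calc x ^ (1 - q) * log x = 2 * (x ^ (1 - q) / (q - 1) * ((q - 1) / 2 * log x)) := by
        field_simp [show q - 1 ≠ 0 by linarith]
    _ ≤ 2 * (s * -log s) := by
        gcongr
        · exact mul_nonneg (by linarith) (log_nonneg hx)
        · exact rpow_one_sub_div_le_rpowTail hq hx0
    _ = 2 * negMulLog s := by rw [negMulLog, neg_mul, mul_neg]

lemma negMulLog_rpow_neg {y : ℝ} (hy : 0 < y) :
    negMulLog (y ^ (-q)) = q * (y ^ (-q) * log y) := by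
  rw [negMulLog, log_rpow hy]
  ring

lemma summable_negMulLog_add_nat_rpow_neg (hq : 1 < q) (hx : 1 ≤ x) :
    Summable fun i : ℕ => negMulLog ((x + i) ^ (-q)) :=
  ((summable_add_nat_rpow_neg_mul_log hq hx).mul_left q).congr fun i =>
    (negMulLog_rpow_neg (by positivity)).symm

lemma eventually_tsum_negMulLog_rpow_neg_le (hq : 1 < q) :
    ∀ᶠ x in atTop, ∑' i : ℕ, negMulLog ((x + i) ^ (-q))
      ≤ 2 * q * (q / (q - 1) + 1) * negMulLog (rpowTail q x) := by
  filter_upwards [eventually_ge_atTop 1, eventually_tsum_add_nat_rpow_neg_mul_log_le hq,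
    eventually_rpow_one_sub_mul_log_le_negMulLog_rpowTail hq] with x hx hnum hden
  have hA : 0 ≤ q / (q - 1) + 1 := by
    have : 0 < q / (q - 1) := div_pos (by linarith) (by linarith)
    linarith
  calc ∑' i : ℕ, negMulLog ((x + i) ^ (-q)) = q * ∑' i : ℕ, (x + i) ^ (-q) * log (x + i) := by
        rw [← tsum_mul_left]
        exact tsum_congr fun i => negMulLog_rpow_neg (by positivity)
    _ ≤ q * ((q / (q - 1) + 1) * (2 * negMulLog (rpowTail q x))) := by
        gcongr
        exact hnum.trans (mul_le_mul_of_nonneg_left hden hA)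
    _ = _ := by ring

end TailEntropy

section Envelope

lemma tsum_Tset {M : Type*} [AddCommMonoid M] [TopologicalSpace M] (g : ℕ → M) (k : ℕ) :
    ∑' x : Tset k, g x = ∑' i : ℕ, g (k + i) :=
  let e : ℕ ≃ Tset k := ⟨fun i => ⟨k + i, Nat.le_add_right k i⟩, fun x => x.1 - k,
    fun i => by simp, fun x => Subtype.ext (Nat.add_sub_cancel' x.2)⟩
  (e.tsum_eq fun x => g x).symm

lemma entTerm_ofReal {s : ℝ} (hs : 0 ≤ s) :
    entTerm (ENNReal.ofReal s) = ENNReal.ofReal (negMulLog s / log 2) := by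
  rw [entTerm, ENNReal.toReal_ofReal hs, logb, negMulLog]
  ring_nf

lemma coe_rpow_eq_ofReal (y : ℝ≥0) (a : ℝ) :
    ((y ^ a : ℝ≥0) : ℝ≥0∞) = ENNReal.ofReal ((y : ℝ) ^ a) := by
  rw [← NNReal.coe_rpow, ENNReal.ofReal_coe_nnreal]

lemma measOf_mutilde_Tset {f : ℕ → ℝ≥0} {k : ℕ} (hk : tauF f ≤ k) :
    measOf (mutilde f) (Tset k) = tailF f k :=
  tsum_congr fun x => if_pos (hk.trans x.2)

variable {p : ℝ}

lemma tailF_natCast_rpow_neg (hp : 1 < p) (k : ℕ) :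
    tailF (fun i : ℕ => (i : ℝ≥0) ^ (-p)) k = ENNReal.ofReal (rpowTail p k) := by
  rw [tailF, tsum_Tset (fun i : ℕ => (((i : ℝ≥0) ^ (-p) : ℝ≥0) : ℝ≥0∞)), rpowTail,
    ENNReal.ofReal_tsum_of_nonneg (fun i => by positivity)
      (summable_add_nat_rpow_neg hp k.cast_nonneg)]
  refine tsum_congr fun i => ?_
  rw [coe_rpow_eq_ofReal]
  push_cast
  rfl

lemma tsum_Tset_entTerm_natCast_rpow_neg (hp : 1 < p) {k : ℕ} (hk : 1 ≤ k) :
    ∑' i : Tset k, entTerm (((i.1 : ℝ≥0) ^ (-p) : ℝ≥0) : ℝ≥0∞)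
      = ENNReal.ofReal ((∑' i : ℕ, negMulLog (((k : ℝ) + i) ^ (-p))) / log 2) := by
  have hk' : (1 : ℝ) ≤ k := by exact_mod_cast hk
  have hnonneg (i : ℕ) : 0 ≤ negMulLog (((k : ℝ) + i) ^ (-p)) / log 2 :=
    div_nonneg (negMulLog_nonneg (by positivity)
      (rpow_le_one_of_one_le_of_nonpos (le_add_of_le_of_nonneg hk' i.cast_nonneg) (by linarith)))
      (log_nonneg one_le_two)
  rw [tsum_Tset (fun n : ℕ => entTerm (((n : ℝ≥0) ^ (-p) : ℝ≥0) : ℝ≥0∞)), ← tsum_div_const,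
    ENNReal.ofReal_tsum_of_nonneg hnonneg
      ((summable_negMulLog_add_nat_rpow_neg hp hk').div_const _)]
  refine tsum_congr fun i => ?_
  rw [coe_rpow_eq_ofReal, entTerm_ofReal (by positivity)]
  push_cast
  rfl

end Envelope

/-- Polynomial envelopes satisfy the tail regularity condition: for `p > 1` and
`f_p(i) = i^{−p}`,
`limsup_k (∑_{i ≥ k} f_p(i)·log₂(1/f_p(i))) / (μ̃_{f_p}(T_k)·log₂(1/μ̃_{f_p}(T_k))) < ∞`. -/
theorem polynomial_envelope_tail_regularity (p : ℝ) (hp : 1 < p) :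
    Filter.limsup (fun k : ℕ =>
        (∑' i : Tset k, entTerm ((((i.1 : ℝ≥0) ^ (-p) : ℝ≥0)) : ℝ≥0∞))
          / entTerm (measOf (mutilde (fun i : ℕ => (i : ℝ≥0) ^ (-p))) (Tset k)))
      atTop < ⊤ := by
  set c := 2 * p * (p / (p - 1) + 1)
  have hc : 0 ≤ c := by
    have : 0 < p / (p - 1) := div_pos (by linarith) (by linarith)
    positivity
  have hev : ∀ᶠ k : ℕ in atTop,
      ∑' i : Tset k, entTerm ((((i.1 : ℝ≥0) ^ (-p) : ℝ≥0)) : ℝ≥0∞)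
        ≤ ENNReal.ofReal c
          * entTerm (measOf (mutilde (fun i : ℕ => (i : ℝ≥0) ^ (-p))) (Tset k)) := by
    filter_upwards
      [tendsto_natCast_atTop_atTop.eventually (eventually_tsum_negMulLog_rpow_neg_le hp),
      eventually_ge_atTop (max (tauF fun i : ℕ => (i : ℝ≥0) ^ (-p)) 1)] with k hk hkτ
    rw [tsum_Tset_entTerm_natCast_rpow_neg hp (le_of_max_le_right hkτ),
      measOf_mutilde_Tset (le_of_max_le_left hkτ), tailF_natCast_rpow_neg hp,
      entTerm_ofReal (rpowTail_pos hp (by exact_mod_cast le_of_max_le_right hkτ)).le,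
      ← ENNReal.ofReal_mul hc, mul_div_assoc']
    exact ENNReal.ofReal_le_ofReal (div_le_div_of_nonneg_right hk (log_nonneg one_le_two))
  have hlimsup := limsup_le_of_le (by isBoundedDefault)
    (hev.mono fun k hk => ENNReal.div_le_of_le_mul hk)
  exact hlimsup.trans_lt ENNReal.ofReal_lt_top
end
end

section
/- (Upper bound on the weighted-log polynomial tail series.) Let p > 1. Then for every k ≥ 2: ∑_{i ≥ k} log₂(i)/i^p ≤ (log₂(k)/k^{p−1})·∑_{i ≥ 1} i^{−p} + (1/k^{p−1})·∑_{i ≥ 1} log₂(i+1)/i^p. -/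
open Filter Topology
open scoped ENNReal NNReal BigOperators

noncomputable section

/-!
Split the indices `i ≥ k` into the blocks `k j ≤ i < k (j + 1)`, `j ≥ 1`, of `k` indices each.
On a block `log₂ i ≤ log₂ k + log₂ (j + 1)` and `i ^ p ≥ (k j) ^ p`, so the tail is at most
`k ∑_{j ≥ 1} (log₂ k + log₂ (j + 1)) / (k j) ^ p`, which is the right-hand side.
-/

open Real

lemma summable_log_div_rpow {p : ℝ} (hp : 1 < p) :
    Summable fun n : ℕ => log n / (n : ℝ) ^ p := by
  obtain ⟨ε, hε, hεp⟩ : ∃ ε : ℝ, 0 < ε ∧ ε - p < -1 := ⟨(p - 1) / 2, by linarith, by linarith⟩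
  refine ((summable_nat_rpow.mpr hεp).div_const ε).of_nonneg_of_le
    (fun n => div_nonneg (log_natCast_nonneg n) (by positivity)) (fun n => ?_)
  calc log n / (n : ℝ) ^ p ≤ (n : ℝ) ^ ε / ε / (n : ℝ) ^ p := by
        gcongr; exact log_le_rpow_div n.cast_nonneg hε
    _ = (n : ℝ) ^ (ε - p) / ε := by rw [rpow_sub' n.cast_nonneg (by linarith)]; ring

lemma logb_natCast_nonneg {b : ℝ} (hb : 1 < b) (n : ℕ) : 0 ≤ logb b n :=
  div_nonneg (log_natCast_nonneg n) (log_nonneg hb.le)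

lemma summable_logb_add_one_div_rpow {b p : ℝ} (hb : 1 < b) (hp : 1 < p) :
    Summable fun n : ℕ => logb b (n + 1) / (n : ℝ) ^ p := by
  have hmaj : Summable fun n : ℕ => logb b 2 * (n : ℝ) ^ (-p) + log n / (n : ℝ) ^ p / log b :=
    ((summable_nat_rpow.mpr (by linarith)).mul_left _).add ((summable_log_div_rpow hp).div_const _)
  refine hmaj.of_nonneg_of_le (fun n => div_nonneg ?_ (by positivity)) (fun n => ?_)
  · exact logb_nonneg hb (by linarith [n.cast_nonneg (α := ℝ)])
  rcases Nat.eq_zero_or_pos n with rfl | hn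
  · simp [zero_rpow (by linarith : -p ≠ 0)]
  have hn1 : (1 : ℝ) ≤ n := by exact_mod_cast hn
  have hlog : logb b (n + 1) ≤ logb b 2 + logb b n := by
    rw [← logb_mul two_ne_zero (by positivity)]
    exact logb_le_logb_of_le hb (by positivity) (by linarith)
  calc logb b (n + 1) / (n : ℝ) ^ p ≤ (logb b 2 + logb b n) / (n : ℝ) ^ p := by gcongr
    _ = logb b 2 * (n : ℝ) ^ (-p) + log n / (n : ℝ) ^ p / log b := by
        rw [rpow_neg (by positivity), logb, logb]; ring

lemma tsum_Tset_le_mul_tsum_Tset_one {f g : ℕ → ℝ} {k : ℕ} (hk : 0 < k) (hf : ∀ i, 0 ≤ f i)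
    (hg : Summable fun j : Tset 1 => g j) (hfg : ∀ i, k ≤ i → f i ≤ g (i / k)) :
    ∑' i : Tset k, f i ≤ k * ∑' j : Tset 1, g j := by
  have hdiv : ∀ i : Tset k, 1 ≤ i.1 / k := fun i => (Nat.one_le_div_iff hk).mpr i.2
  let e : Tset k → Tset 1 × Fin k := fun i => (⟨i.1 / k, hdiv i⟩, ⟨i.1 % k, Nat.mod_lt _ hk⟩)
  have he : Function.Injective e := by
    intro a b hab
    have hq : a.1 / k = b.1 / k := congrArg (fun x => x.1.1) hab
    have hr : a.1 % k = b.1 % k := congrArg (fun x => x.2.1) hab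
    exact Subtype.ext (by rw [← Nat.div_add_mod a.1 k, ← Nat.div_add_mod b.1 k, hq, hr])
  have hg0 : ∀ j : Tset 1, 0 ≤ g j := fun j => by
    simpa [Nat.mul_div_cancel_left _ hk] using
      (hf (k * j)).trans (hfg (k * j) (Nat.le_mul_of_pos_right _ j.2))
  have hG : Summable fun x : Tset 1 × Fin k => g x.1 := by
    simpa using hg.mul_of_nonneg (Summable.of_finite : Summable fun _ : Fin k => (1 : ℝ))
      (fun j => hg0 j) (fun _ => zero_le_one)
  have hle : ∀ i : Tset k, f i ≤ g (e i).1 := fun i => hfg i i.2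
  calc ∑' i : Tset k, f i ≤ ∑' x : Tset 1 × Fin k, g x.1 :=
        Summable.tsum_le_tsum_of_inj e he (fun x _ => hg0 x.1) hle
          ((hG.comp_injective he).of_nonneg_of_le (fun i => hf i) hle) hG
    _ = ∑' j : Tset 1, ∑' _ : Fin k, g j := hG.tsum_prod' fun _ => .of_finite
    _ = k * ∑' j : Tset 1, g j := by simp [tsum_fintype, tsum_mul_left]

lemma logb_div_rpow_le_of_le {b p : ℝ} (hb : 1 < b) (hp : 0 ≤ p) {k i : ℕ} (hk : 0 < k)
    (hki : k ≤ i) :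
    logb b i / (i : ℝ) ^ p ≤ (logb b k + logb b ((i / k : ℕ) + 1)) / ((k : ℝ) * (i / k : ℕ)) ^ p := by
  have hj : 1 ≤ i / k := (Nat.one_le_div_iff hk).mpr hki
  have hlow : ((k : ℝ) * (i / k : ℕ)) ≤ i := by exact_mod_cast Nat.mul_div_le i k
  have hhigh : (i : ℝ) ≤ k * ((i / k : ℕ) + 1) := by exact_mod_cast (Nat.lt_mul_div_succ i hk).le
  have hnum : logb b i ≤ logb b k + logb b ((i / k : ℕ) + 1) := by
    rw [← logb_mul (by positivity) (by positivity)]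
    exact logb_le_logb_of_le hb (by norm_cast; omega) hhigh
  exact div_le_div₀ (add_nonneg (logb_natCast_nonneg hb k) (logb_nonneg hb (by simp)))
    hnum (by positivity) (by gcongr)

lemma mul_add_div_mul_rpow {k j : ℝ} (hk : 0 < k) (hj : 0 < j) (p a c : ℝ) :
    k * ((a + c) / (k * j) ^ p) = a / k ^ (p - 1) * j ^ (-p) + 1 / k ^ (p - 1) * (c / j ^ p) := by
  rw [mul_rpow hk.le hj.le, rpow_neg hj.le, rpow_sub hk, rpow_one]
  field_simp

/-- Upper bound on the weighted-log polynomial tail series: for `p > 1` and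
every `k ≥ 2`:
`∑_{i ≥ k} log₂(i)/i^p ≤ (log₂(k)/k^{p−1})·∑_{i ≥ 1} i^{−p}
  + (1/k^{p−1})·∑_{i ≥ 1} log₂(i+1)/i^p`. -/
theorem weighted_log_tail_bound (p : ℝ) (hp : 1 < p) (k : ℕ) (hk : 2 ≤ k) :
    (∑' i : Tset k, Real.logb 2 (i.1 : ℝ) / (i.1 : ℝ) ^ p)
      ≤ (Real.logb 2 (k : ℝ) / (k : ℝ) ^ (p - 1)) * (∑' i : Tset 1, ((i.1 : ℝ) ^ (-p)))
        + (1 / (k : ℝ) ^ (p - 1)) * (∑' i : Tset 1, Real.logb 2 ((i.1 : ℝ) + 1) / (i.1 : ℝ) ^ p) := by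
  have hk0 : 0 < k := by omega
  have hkR : (0 : ℝ) < k := by exact_mod_cast hk0
  set L := logb 2 (k : ℝ)
  set g : ℕ → ℝ := fun j => (L + logb 2 ((j : ℝ) + 1)) / ((k : ℝ) * j) ^ p
  have hkg : ∀ j : Tset 1, k * g j
      = L / (k : ℝ) ^ (p - 1) * (j.1 : ℝ) ^ (-p)
        + 1 / (k : ℝ) ^ (p - 1) * (logb 2 ((j.1 : ℝ) + 1) / (j.1 : ℝ) ^ p) := fun j =>
    mul_add_div_mul_rpow hkR (by exact_mod_cast j.2) p _ _
  have hS1 : Summable fun j : Tset 1 => (j.1 : ℝ) ^ (-p) :=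
    (summable_nat_rpow.mpr (by linarith)).subtype _
  have hS2 : Summable fun j : Tset 1 => logb 2 ((j.1 : ℝ) + 1) / (j.1 : ℝ) ^ p :=
    (summable_logb_add_one_div_rpow one_lt_two hp).subtype _
  have hS1' := hS1.mul_left (L / (k : ℝ) ^ (p - 1))
  have hS2' := hS2.mul_left (1 / (k : ℝ) ^ (p - 1))
  have hg : Summable fun j : Tset 1 => g j :=
    (summable_mul_left_iff hkR.ne').mp (by simpa only [hkg] using hS1'.add hS2')
  calc ∑' i : Tset k, logb 2 (i.1 : ℝ) / (i.1 : ℝ) ^ p ≤ k * ∑' j : Tset 1, g j :=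
        tsum_Tset_le_mul_tsum_Tset_one hk0
          (fun i => div_nonneg (logb_natCast_nonneg one_lt_two i) (by positivity)) hg
          (fun i hi => logb_div_rpow_le_of_le one_lt_two (by linarith) hk0 hi)
    _ = ∑' j : Tset 1, k * g j := tsum_mul_left.symm
    _ = _ := by rw [tsum_congr hkg, hS1'.tsum_add hS2', tsum_mul_left, tsum_mul_left]
end
end

section
/- (Exponential envelopes satisfy the tail regularity condition.) Let K > 1 and α > 0, and let f_α(i) = K·e^{−α i} for i ∈ X = {1,2,3,...} (f_α is summable, so the envelope distribution μ̃_{f_α} is well defined). Then limsup_{k→∞} ( ∑_{i ≥ k} f_α(i)·log₂(1/f_α(i)) ) / ( μ̃_{f_α}(T_k)·log₂(1/μ̃_{f_α}(T_k)) ) < ∞. -/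
open Filter Topology
open scoped ENNReal NNReal BigOperators

noncomputable section

/-!
Write `r = e^{-α}`, so `f(i) = K rⁱ`. For `k ≥ τ_f` the envelope agrees with `f` on `T_k`, hence
`μ̃(T_k) = c rᵏ` with `c = K/(1-r)`, and its entropy term `c rᵏ (kα - log c)/log 2` is of exact
order `k rᵏ`. In the numerator, `-log₂ f(i) ≤ iα/log 2` and `∑_{i ≥ k} i rⁱ ≤ (k+1) rᵏ ∑_j (j+1) rʲ`,
so it is `O(k rᵏ)` as well.
-/

open Real

lemma tsum_Tset_eq (g : ℕ → ℝ≥0∞) (k : ℕ) : ∑' x : Tset k, g x = ∑' j, g (k + j) := by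
  have hrange : Tset k = Set.range (k + ·) := by
    ext x
    change k ≤ x ↔ ∃ j, k + j = x
    exact ⟨fun h => ⟨x - k, by omega⟩, by rintro ⟨j, rfl⟩; omega⟩
  rw [hrange, tsum_range g (add_right_injective k)]

lemma measOf_mutilde_Tset_of_tauF_le (f : ℕ → ℝ≥0) {k : ℕ} (hk : tauF f ≤ k) :
    measOf (mutilde f) (Tset k) = tailF f k :=
  tsum_congr fun x => if_pos (hk.trans x.2)

lemma entTerm_ofReal_s18 {t : ℝ} (ht : 0 ≤ t) :
    entTerm (ENNReal.ofReal t) = ENNReal.ofReal (t * -logb 2 t) := by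
  rw [entTerm, ENNReal.toReal_ofReal ht, mul_neg]

lemma entTerm_ofReal_le {t L : ℝ} (ht : 0 ≤ t) (h : -logb 2 t ≤ L) :
    entTerm (ENNReal.ofReal t) ≤ ENNReal.ofReal (t * L) := by
  rw [entTerm_ofReal_s18 ht]
  exact ENNReal.ofReal_le_ofReal (mul_le_mul_of_nonneg_left h ht)

lemma ofReal_le_entTerm_ofReal {t L : ℝ} (ht : 0 ≤ t) (h : L ≤ -logb 2 t) :
    ENNReal.ofReal (t * L) ≤ entTerm (ENNReal.ofReal t) := by
  rw [entTerm_ofReal_s18 ht]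
  exact ENNReal.ofReal_le_ofReal (mul_le_mul_of_nonneg_left h ht)

lemma limsup_div_lt_top_of_le_of_le {ι : Type*} {l : Filter ι} {N D : ι → ℝ≥0∞} {g : ι → ℝ}
    {A B : ℝ} (hB : 0 < B) (hg : ∀ᶠ i in l, 0 < g i)
    (hN : ∀ᶠ i in l, N i ≤ ENNReal.ofReal (A * g i))
    (hD : ∀ᶠ i in l, ENNReal.ofReal (B * g i) ≤ D i) :
    limsup (fun i => N i / D i) l < ⊤ := by
  refine (limsup_le_of_le (by isBoundedDefault) ?_).trans_lt (ENNReal.ofReal_lt_top (r := A / B))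
  filter_upwards [hg, hN, hD] with i hgi hNi hDi
  calc N i / D i ≤ ENNReal.ofReal (A * g i) / ENNReal.ofReal (B * g i) := ENNReal.div_le_div hNi hDi
    _ = ENNReal.ofReal (A / B) := by
      rw [← ENNReal.ofReal_div_of_pos (by positivity), mul_div_mul_right _ _ hgi.ne']

def geomEnv (K r : ℝ) : ℕ → ℝ≥0 := fun i => (K * r ^ i).toNNReal

section geomEnv

variable {K r : ℝ}

lemma coe_geomEnv (i : ℕ) : (geomEnv K r i : ℝ≥0∞) = ENNReal.ofReal (K * r ^ i) := rfl

lemma tailF_geomEnv (hK : 0 ≤ K) (hr0 : 0 ≤ r) (hr1 : r < 1) (k : ℕ) :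
    tailF (geomEnv K r) k = ENNReal.ofReal (K / (1 - r) * r ^ k) := by
  have hsum : Summable fun j : ℕ => K * r ^ k * r ^ j :=
    (summable_geometric_of_lt_one hr0 hr1).mul_left _
  rw [tailF, tsum_Tset_eq (fun i => (geomEnv K r i : ℝ≥0∞))]
  simp_rw [coe_geomEnv, pow_add, ← mul_assoc]
  rw [← ENNReal.ofReal_tsum_of_nonneg (fun j => by positivity) hsum, tsum_mul_left,
    tsum_geometric_of_lt_one hr0 hr1]
  ring_nf

lemma neg_logb_mul_pow (hK : 0 < K) (hr : 0 < r) (n : ℕ) :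
    -logb 2 (K * r ^ n) = (n * -log r - log K) / log 2 := by
  rw [logb, log_mul hK.ne' (pow_pos hr n).ne', log_pow]
  ring

lemma tsum_entTerm_geomEnv_le (hK : 1 ≤ K) (hr0 : 0 < r) (hr1 : r < 1) (k : ℕ) :
    ∑' i : Tset k, entTerm (geomEnv K r i) ≤
      ENNReal.ofReal (K * -log r / log 2 * (∑' j : ℕ, (j + 1) * r ^ j) * ((k + 1) * r ^ k)) := by
  have hL : 0 ≤ -log r := neg_nonneg.mpr (log_nonpos hr0.le hr1.le)
  have hsum : Summable fun j : ℕ => ((j : ℝ) + 1) * r ^ j := by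
    simpa [add_mul] using (summable_pow_mul_geometric_of_norm_lt_one 1
      (by rwa [norm_of_nonneg hr0.le])).add (summable_geometric_of_lt_one hr0.le hr1)
  have hterm (j : ℕ) : entTerm (geomEnv K r (k + j)) ≤
      ENNReal.ofReal (K * -log r / log 2 * ((k + 1) * r ^ k) * ((j + 1) * r ^ j)) := by
    refine (entTerm_ofReal_le (L := (k + 1) * (j + 1) * -log r / log 2) (by positivity) ?_).trans_eq
      (by rw [pow_add]; ring_nf)
    rw [neg_logb_mul_pow (by linarith) hr0]
    gcongr
    have hkj : (k : ℝ) + j ≤ (k + 1) * (j + 1) := by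
      nlinarith [(k.cast_nonneg : (0 : ℝ) ≤ k), (j.cast_nonneg : (0 : ℝ) ≤ j)]
    push_cast
    nlinarith [log_nonneg hK, mul_le_mul_of_nonneg_right hkj hL]
  rw [tsum_Tset_eq (fun i => entTerm (geomEnv K r i))]
  refine (ENNReal.tsum_le_tsum hterm).trans_eq ?_
  rw [← ENNReal.ofReal_tsum_of_nonneg (fun j => by positivity) (hsum.mul_left _), tsum_mul_left]
  ring_nf

lemma ofReal_le_entTerm_measOf_mutilde_geomEnv (hK : 0 < K) (hr0 : 0 < r) (hr1 : r < 1)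
    {k : ℕ} (hτ : tauF (geomEnv K r) ≤ k) (hk : 1 ≤ k) (hkc : 2 * log (K / (1 - r)) ≤ k * -log r) :
    ENNReal.ofReal (K / (1 - r) * -log r / (4 * log 2) * ((k + 1) * r ^ k)) ≤
      entTerm (measOf (mutilde (geomEnv K r)) (Tset k)) := by
  have hc : 0 < K / (1 - r) := div_pos hK (by linarith)
  have hL : 0 ≤ -log r := neg_nonneg.mpr (log_nonpos hr0.le hr1.le)
  rw [measOf_mutilde_Tset_of_tauF_le _ hτ, tailF_geomEnv hK.le hr0.le hr1]
  refine le_of_eq_of_le (by ring_nf) (ofReal_le_entTerm_ofReal (L := (k + 1) * -log r / (4 * log 2))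
    (by positivity) ?_)
  have hk' : (1 : ℝ) ≤ k := by exact_mod_cast hk
  have hlin : (k + 1) * -log r / 4 ≤ k * -log r - log (K / (1 - r)) := by nlinarith
  rw [neg_logb_mul_pow hc hr0]
  calc (k + 1) * -log r / (4 * log 2) = (k + 1) * -log r / 4 / log 2 := by ring
    _ ≤ _ := by gcongr

theorem geomEnv_tail_regularity (hK : 1 ≤ K) (hr0 : 0 < r) (hr1 : r < 1) :
    limsup (fun k : ℕ => (∑' i : Tset k, entTerm (geomEnv K r i)) /
      entTerm (measOf (mutilde (geomEnv K r)) (Tset k))) atTop < ⊤ := by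
  have hL : 0 < -log r := neg_pos.mpr (log_neg hr0 hr1)
  have hlarge : ∀ᶠ k : ℕ in atTop, 2 * log (K / (1 - r)) ≤ k * -log r :=
    (tendsto_natCast_atTop_atTop.atTop_mul_const hL).eventually_ge_atTop _
  refine limsup_div_lt_top_of_le_of_le (g := fun k : ℕ => (k + 1) * r ^ k)
    (B := K / (1 - r) * -log r / (4 * log 2)) ?_
    (.of_forall fun k => by positivity) (.of_forall (tsum_entTerm_geomEnv_le hK hr0 hr1)) ?_
  · have := log_pos one_lt_two
    have : 0 < K / (1 - r) := div_pos (by linarith) (by linarith)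
    positivity
  · filter_upwards [eventually_ge_atTop (tauF (geomEnv K r)), eventually_ge_atTop 1, hlarge]
      with k hτ hk hkc
    exact ofReal_le_entTerm_measOf_mutilde_geomEnv (by linarith) hr0 hr1 hτ hk hkc

end geomEnv

/-- Exponential envelopes satisfy the tail regularity condition: for `K > 1`,
`α > 0` and `f_α(i) = K·e^{−α i}`,
`limsup_k (∑_{i ≥ k} f_α(i)·log₂(1/f_α(i))) / (μ̃_{f_α}(T_k)·log₂(1/μ̃_{f_α}(T_k))) < ∞`. -/
theorem exponential_envelope_tail_regularity (K α : ℝ) (hK : 1 < K) (hα : 0 < α) :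
    Filter.limsup (fun k : ℕ =>
        (∑' i : Tset k, entTerm ((Real.toNNReal (K * Real.exp (-α * (i.1 : ℝ))) : ℝ≥0∞)))
          / entTerm (measOf
              (mutilde (fun i : ℕ => Real.toNNReal (K * Real.exp (-α * (i : ℝ)))))
              (Tset k)))
      atTop < ⊤ := by
  have hgeom (i : ℕ) : (K * exp (-α * i)).toNNReal = geomEnv K (exp (-α)) i := by
    rw [geomEnv, ← exp_nat_mul, mul_comm (i : ℝ)]
  simp only [hgeom]
  exact geomEnv_tail_regularity hK.le (exp_pos _) (exp_lt_one_iff.mpr (neg_neg_of_pos hα))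
end
end

section
/- (Distortion bound for the two-stage lossy/lossless reconstruction.) Fix k ≥ 1 and let Γ_k = {1,...,k}, Γ_{k+1} = {1,...,k+1}. Define S_k : X → Γ_{k+1} by S_k(x) = x if x ≤ k and S_k(x) = k+1 otherwise; O_k : X → {1} ∪ {k+1, k+2, ...} by O_k(x) = 1 if x ≤ k and O_k(x) = x otherwise; and Ψ_k(ŷ, z) = z if z > k and Ψ_k(ŷ, z) = ŷ if z = 1. Let ρ be a distortion on X with ρ(a,a) = 0 for all a, and let ρ̃ : Γ_{k+1} × Γ_{k+1} → [0,∞) satisfy ρ̃(a,b) = ρ(a,b) for all a,b ∈ Γ_k and ρ(a, k+1) ≤ ρ̃(a, k+1) for all a ∈ Γ_k. Then for every n ≥ 1, every x^n ∈ X^n and every ŷ^n ∈ Γ_{k+1}^n, setting y^n = (S_k(x_1),...,S_k(x_n)), z^n = (O_k(x_1),...,O_k(x_n)) and x̂^n = (Ψ_k(ŷ_1, z_1),...,Ψ_k(ŷ_n, z_n)), one has ρ_n(x^n, x̂^n) ≤ ρ̃_n(y^n, ŷ^n). -/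
open Filter Topology
open scoped ENNReal NNReal BigOperators

noncomputable section

/-- First-stage (truncation) map `S_k : X → Γ_{k+1}`. -/
def Smap (k a : ℕ) : ℕ := if a ≤ k then a else k + 1

/-- Second-stage (tail) map `O_k : X → {1} ∪ Γ_k^c`. -/
def Omap (k a : ℕ) : ℕ := if a ≤ k then 1 else a

/-- Reconstruction map `Ψ_k(ŷ, z) = z` if `z > k`, `ŷ` if `z = 1` (i.e. `z ≤ k`). -/
def PsiMap (k yh z : ℕ) : ℕ := if k < z then z else yh

/-- Distortion bound for the two-stage lossy/lossless reconstruction: with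
`y^n = S_k(x^n)`, `z^n = O_k(x^n)` and `x̂^n = Ψ_k(ŷ^n, z^n)`, if `ρ̃` coincides with `ρ` on
`Γ_k × Γ_k` and `ρ(a, k+1) ≤ ρ̃(a, k+1)` for `a ∈ Γ_k`, then
`ρ_n(x^n, x̂^n) ≤ ρ̃_n(y^n, ŷ^n)`. -/
theorem two_stage_distortion_bound (k : ℕ) (hk : 1 ≤ k)
    (ρ ρt : ℕ → ℕ → ℝ)
    (hρ0 : ∀ a b, 0 ≤ ρ a b) (hρdiag : ∀ a, ρ a a = 0)
    (hρt0 : ∀ a b, 0 ≤ ρt a b)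
    (hcoincide : ∀ a b : ℕ, 1 ≤ a → a ≤ k → 1 ≤ b → b ≤ k → ρt a b = ρ a b)
    (hmaj : ∀ a : ℕ, 1 ≤ a → a ≤ k → ρ a (k + 1) ≤ ρt a (k + 1))
    (n : ℕ) (hn : 1 ≤ n)
    (x : Fin n → ℕ) (hx : ∀ i, 1 ≤ x i)
    (yhat : Fin n → ℕ) (hyhat : ∀ i, 1 ≤ yhat i ∧ yhat i ≤ k + 1) :
    blockDist ρ n x (fun i => PsiMap k (yhat i) (Omap k (x i)))
      ≤ blockDist ρt n (fun i => Smap k (x i)) yhat := by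
  unfold blockDist
  gcongr ?_ / (n:ℝ)
  apply Finset.sum_le_sum
  intro i _
  simp only
  rcases le_or_gt (x i) k with h | h
  · have hO : Omap k (x i) = 1 := if_pos h
    have hS : Smap k (x i) = x i := if_pos h
    have hP : PsiMap k (yhat i) (Omap k (x i)) = yhat i := by
      rw [hO]; exact if_neg (by omega)
    rw [hP, hS]
    rcases le_or_gt (yhat i) k with h2 | h2
    · rw [hcoincide _ _ (hx i) h (hyhat i).1 h2]
    · have : yhat i = k + 1 := by have := (hyhat i).2; omega
      rw [this]; exact hmaj _ (hx i) h
  · have hO : Omap k (x i) = x i := if_neg (by omega)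
    have hP : PsiMap k (yhat i) (Omap k (x i)) = x i := by rw [hO]; exact if_pos h
    rw [hP, hρdiag]
    exact hρt0 _ _
end
end
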